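/- arXiv:2110.15304 — 3 statements merged into one kernel-verified Lean document; each statement's English description precedes it below -/
import Mathlib

section
/- Let d ∈ ℕ, p ∈ (0,∞), and suppose γ*(ℓ,c) < ∞. If α > (d/p)·γ*(ℓ,c), then the neural network approximation space A^α_{ℓ,c,p}([0,1]^d) embeds continuously into C([0,1]^d): every f ∈ A^α_{ℓ,c,p}([0,1]^d) has a continuous representative, and there is a constant C = C(d,p,α,ℓ,c) > 0 such that ‖f‖_{L^∞([0,1]^d)} ≤ C·‖f‖_{A^α_{ℓ,c,p}} for all f ∈ A^α_{ℓ,c,p}([0,1]^d). -/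
/-!
A realization of a network in `Σ_n` with `L` layers and weights bounded by `c(n)` is Lipschitz with
constant `d · c(n)^L · n^⌊L/2⌋`, which is `O(n^γ)` for every `γ > γ*(ℓ,c)`. A `Λ`-Lipschitz
function `h` on the cube with `|h x₀| = M` stays above `M/2` on a sub-cube of side
`min 1 (M/(2Λ))` around `x₀`, so `M` is controlled by `‖h‖_{L^p}` and `Λ`. Applied to the
differences of near-best approximants of `f` from `Σ_{2^k}`, whose `L^p` sizes decay like
`2^{-αk}` while their Lipschitz constants grow like `2^{γk}`, this gives sup-norm bounds that decay
geometrically because `α > (d/p)·γ`. Hence the approximants converge uniformly on the cube; the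
limit is continuous and agrees a.e. with `f`, and the same estimates bound it by a multiple of
`‖f‖_{A^α}`.
-/

open MeasureTheory Filter
open scoped ENNReal NNReal Classical

noncomputable section

/-- The ReLU activation function. -/
def relu (x : ℝ) : ℝ := max 0 x

/-- A (ReLU) neural network with input dimension `d` and output dimension `1` is encoded by
its number of layers `L ≥ 1`, its widths `N` (with `N 0 = d` and `N L = 1`),
its matrices `A ℓ` and bias vectors `b ℓ` (only the values for `ℓ < L` are relevant). -/
structure NeuralNet (d : ℕ) where
  L : ℕ
  hL : 0 < L
  N : ℕ → ℕ
  hN0 : N 0 = d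
  hNL : N L = 1
  A : ∀ ℓ : ℕ, Matrix (Fin (N (ℓ + 1))) (Fin (N ℓ)) ℝ
  b : ∀ ℓ : ℕ, Fin (N (ℓ + 1)) → ℝ

namespace NeuralNet

variable {d : ℕ}

/-- The vector of values computed in the `k`-th layer, with ReLU applied after
each affine map. -/
def hidden (Φ : NeuralNet d) : (k : ℕ) → (Fin d → ℝ) → Fin (Φ.N k) → ℝ
  | 0, x => x ∘ Fin.cast Φ.hN0
  | k + 1, x => fun i => relu ((Φ.A k).mulVec (Φ.hidden k x) i + Φ.b k i)

/-- The realization `R_ρ Φ` of the network: the last affine map is applied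
without the ReLU activation. -/
def realization (Φ : NeuralNet d) (x : Fin d → ℝ) : ℝ :=
  ((Φ.A (Φ.L - 1)).mulVec (Φ.hidden (Φ.L - 1) x) + Φ.b (Φ.L - 1))
    (Fin.cast (show (1 : ℕ) = Φ.N (Φ.L - 1 + 1) by
      rw [Nat.sub_add_cancel Φ.hL, Φ.hNL]) 0)

/-- `W(Φ)`: the number of nonzero weights (entries of the matrices and bias vectors). -/
def weightCount (Φ : NeuralNet d) : ℕ :=
  ∑ ℓ ∈ Finset.range Φ.L,
    ((Finset.univ.filter fun ij : Fin (Φ.N (ℓ + 1)) × Fin (Φ.N ℓ) => Φ.A ℓ ij.1 ij.2 ≠ 0).card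
      + (Finset.univ.filter fun i : Fin (Φ.N (ℓ + 1)) => Φ.b ℓ i ≠ 0).card)

/-- `‖Φ‖_NN ≤ C`: all entries of all matrices and bias vectors are bounded by `C` in
absolute value. -/
def weightsBoundedBy (Φ : NeuralNet d) (C : ℝ≥0∞) : Prop :=
  ∀ ℓ < Φ.L, (∀ i j, ENNReal.ofReal |Φ.A ℓ i j| ≤ C) ∧ (∀ i, ENNReal.ofReal |Φ.b ℓ i| ≤ C)

end NeuralNet

/-- `Σ_n`: the set of realizations of networks with input dimension `d`, output dimension 1,
at most `n` nonzero weights, at most `ℓf n` layers, and weights bounded by `cf n`. -/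
def NNSet (d : ℕ) (ℓf : ℕ → ℕ∞) (cf : ℕ → ℝ≥0∞) (n : ℕ) : Set ((Fin d → ℝ) → ℝ) :=
  { F | ∃ Φ : NeuralNet d, F = Φ.realization ∧ Φ.weightCount ≤ n ∧
      (Φ.L : ℕ∞) ≤ ℓf n ∧ Φ.weightsBoundedBy (cf n) }

/-- The unit cube `[0,1]^d`. -/
def unitCube (d : ℕ) : Set (Fin d → ℝ) := Set.Icc 0 1

/-- `d_p(f, S)`: the `L^p(Ω)` distance of `f` to the set `S`. -/
def dLp (d : ℕ) (Ω : Set (Fin d → ℝ)) (p : ℝ≥0∞) (f : (Fin d → ℝ) → ℝ)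
    (S : Set ((Fin d → ℝ) → ℝ)) : ℝ≥0∞ :=
  ⨅ g ∈ S, eLpNorm (f - g) p (volume.restrict Ω)

/-- `Γ(f) = max (‖f‖_{L^p(Ω)}) (sup_{n ≥ 1} n^α d_p(f, Σ_n))`. -/
def Gamma (d : ℕ) (ℓf : ℕ → ℕ∞) (cf : ℕ → ℝ≥0∞) (Ω : Set (Fin d → ℝ)) (p : ℝ≥0∞) (α : ℝ)
    (f : (Fin d → ℝ) → ℝ) : ℝ≥0∞ :=
  max (eLpNorm f p (volume.restrict Ω))
    (⨆ n : ℕ, ((n + 1 : ℕ) : ℝ≥0∞) ^ α * dLp d Ω p f (NNSet d ℓf cf (n + 1)))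

/-- The approximation space quasi-norm `‖f‖_{A^α_{ℓ,c,p}(Ω)} = inf {θ > 0 : Γ(f/θ) ≤ 1}`,
with value `∞` (`sInf ∅`) if no such `θ` exists. -/
def ANorm (d : ℕ) (ℓf : ℕ → ℕ∞) (cf : ℕ → ℝ≥0∞) (Ω : Set (Fin d → ℝ)) (p : ℝ≥0∞) (α : ℝ)
    (f : (Fin d → ℝ) → ℝ) : ℝ≥0∞ :=
  sInf {t : ℝ≥0∞ | ∃ θ : ℝ, 0 < θ ∧ t = ENNReal.ofReal θ ∧
    Gamma d ℓf cf Ω p α (fun x => f x / θ) ≤ 1}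

/-- Membership in the approximation space `A^α_{ℓ,c,p}(Ω)`:
`f ∈ L^p(Ω)` and `‖f‖_{A^α_{ℓ,c,p}} < ∞`. -/
def MemA (d : ℕ) (ℓf : ℕ → ℕ∞) (cf : ℕ → ℝ≥0∞) (Ω : Set (Fin d → ℝ)) (p : ℝ≥0∞) (α : ℝ)
    (f : (Fin d → ℝ) → ℝ) : Prop :=
  MemLp f p (volume.restrict Ω) ∧ ANorm d ℓf cf Ω p α f < ⊤

/-- `ℓ* = sup_n ℓ(n)`. -/
def lstar (ℓf : ℕ → ℕ∞) : ℕ∞ := ⨆ n : ℕ, ℓf n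

/-- `γ*(ℓ,c)`. -/
def gammaStar (ℓf : ℕ → ℕ∞) (cf : ℕ → ℝ≥0∞) : ℝ≥0∞ :=
  sSup {t : ℝ≥0∞ | ∃ γ : ℝ, 0 ≤ γ ∧ t = ENNReal.ofReal γ ∧
    ∃ L : ℕ, 1 ≤ L ∧ (L : ℕ∞) ≤ lstar ℓf ∧
      0 < Filter.limsup
        (fun n : ℕ => cf n ^ L * (n : ℝ≥0∞) ^ (L / 2) / (n : ℝ≥0∞) ^ (γ : ℝ))
        Filter.atTop}

/-- `γ◇(ℓ,c)`. -/
def gammaDiamond (ℓf : ℕ → ℕ∞) (cf : ℕ → ℝ≥0∞) : ℝ≥0∞ :=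
  sInf {t : ℝ≥0∞ | ∃ γ : ℝ, 0 ≤ γ ∧ t = ENNReal.ofReal γ ∧
    ∃ C : ℝ, 0 < C ∧ ∀ n : ℕ, 1 ≤ n → ∀ L : ℕ, 1 ≤ L → (L : ℕ∞) ≤ lstar ℓf →
      cf n ^ L * (n : ℝ≥0∞) ^ (L / 2) ≤ ENNReal.ofReal C * (n : ℝ≥0∞) ^ (γ : ℝ)}

/-- The Hölder seminorm `Lip_β(f)` on the unit cube, with respect to the `ℓ∞` metric
(which is the metric of `Fin d → ℝ`), valued in `[0,∞]`. -/
def eLip (d : ℕ) (β : ℝ) (f : (Fin d → ℝ) → ℝ) : ℝ≥0∞ :=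
  ⨆ x ∈ unitCube d, ⨆ y ∈ unitCube d, ⨆ _ : x ≠ y,
    ENNReal.ofReal (|f x - f y| / dist x y ^ β)

/-- The supremum norm over the unit cube, valued in `[0,∞]`. -/
def supNormCube (d : ℕ) (f : (Fin d → ℝ) → ℝ) : ℝ≥0∞ :=
  ⨆ x ∈ unitCube d, ENNReal.ofReal |f x|

/-- The Hölder norm `‖f‖_{C^{0,β}} = ‖f‖_{L∞} + Lip_β(f)`, valued in `[0,∞]`. -/
def holderNorm (d : ℕ) (β : ℝ) (f : (Fin d → ℝ) → ℝ) : ℝ≥0∞ :=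
  supNormCube d f + eLip d β f

/-- `d/p`, interpreted as `0` when `p = ∞`. -/
def dOverP (d : ℕ) (p : ℝ≥0∞) : ℝ := if p = ⊤ then 0 else (d : ℝ) / p.toReal

/-- The function `ζ_{M'}(x) = max {0, 1 - M' * ∑ i, x i}`. -/
def zeta (d : ℕ) (M' : ℝ) (x : Fin d → ℝ) : ℝ := max 0 (1 - M' * ∑ i, x i)

/-- Piecewise constant interpolation of `f` on the tensor grid `{0, 1/n, …, n/n}^d`,
constant on the cells `(i_1/n, …, i_d/n) + [0, 1/n)^d`. -/
def pwConstGrid (d n : ℕ) (f : (Fin d → ℝ) → ℝ) (x : Fin d → ℝ) : ℝ :=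
  ∑ i : Fin d → Fin (n + 1),
    if ∀ j, ((i j : ℝ) / n ≤ x j ∧ x j < (i j : ℝ) / n + 1 / n) then
      f (fun j => (i j : ℝ) / n) else 0

/-- The piecewise constant interpolation operator `A_m^{pw-const}`,
using the grid with `n = ⌊m^{1/d}⌋ - 1`. -/
def pwConst (d m : ℕ) (f : (Fin d → ℝ) → ℝ) : (Fin d → ℝ) → ℝ :=
  pwConstGrid d (Nat.floor ((m : ℝ) ^ ((d : ℝ)⁻¹)) - 1) f

end

open scoped Topology

theorem abs_relu_sub_relu_le (a b : ℝ) : |relu a - relu b| ≤ |a - b| := by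
  simpa [relu, max_comm] using abs_max_sub_max_le_abs a b 0

section MulVec

variable {m k : ℕ} {A : Matrix (Fin m) (Fin k) ℝ} {c : ℝ}

theorem abs_mulVec_apply_le (hA : ∀ i j, |A i j| ≤ c) (w : Fin k → ℝ) (i : Fin m) :
    |A.mulVec w i| ≤ c * ∑ j, |w j| := by
  rw [Finset.mul_sum, Matrix.mulVec, dotProduct]
  refine (Finset.abs_sum_le_sum_abs _ _).trans (Finset.sum_le_sum fun j _ => ?_)
  rw [abs_mul]
  exact mul_le_mul_of_nonneg_right (hA i j) (abs_nonneg _)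

theorem sum_abs_mulVec_le (hA : ∀ i j, |A i j| ≤ c) (hc : 0 ≤ c) {w : Fin k → ℝ} {M : ℝ}
    (hw : ∀ j, |w j| ≤ M) :
    ∑ i, |A.mulVec w i| ≤
      c * (Finset.univ.filter fun ij : Fin m × Fin k => A ij.1 ij.2 ≠ 0).card * M := by
  calc ∑ i, |A.mulVec w i| ≤ ∑ i, ∑ j, |A i j| * |w j| := by
        refine Finset.sum_le_sum fun i _ => ?_
        rw [Matrix.mulVec, dotProduct]
        exact (Finset.abs_sum_le_sum_abs _ _).trans_eq (by simp only [abs_mul])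
    _ = ∑ ij : Fin m × Fin k, |A ij.1 ij.2| * |w ij.2| :=
        (Fintype.sum_prod_type fun ij : Fin m × Fin k => |A ij.1 ij.2| * |w ij.2|).symm
    _ = ∑ ij ∈ Finset.univ.filter fun ij : Fin m × Fin k => A ij.1 ij.2 ≠ 0,
          |A ij.1 ij.2| * |w ij.2| :=
        (Finset.sum_filter_of_ne fun ij _ h h0 => by simp [h0] at h).symm
    _ ≤ ∑ _ ∈ Finset.univ.filter fun ij : Fin m × Fin k => A ij.1 ij.2 ≠ 0, c * M :=
        Finset.sum_le_sum fun ij _ => mul_le_mul (hA _ _) (hw _) (abs_nonneg _) hc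
    _ = _ := by rw [Finset.sum_const, nsmul_eq_mul]; ring

end MulVec

namespace NeuralNet

variable {d : ℕ} (Φ : NeuralNet d)

theorem continuous_hidden (k : ℕ) : Continuous (Φ.hidden k) := by
  induction k with
  | zero => exact continuous_pi fun i => continuous_apply _
  | succ k ih =>
    exact continuous_pi fun i => continuous_const.max
      (((continuous_apply i).comp (continuous_const.matrix_mulVec ih)).add continuous_const)

theorem continuous_realization : Continuous Φ.realization :=
  (continuous_apply _).comp
    ((continuous_const.matrix_mulVec (Φ.continuous_hidden _)).add continuous_const)

theorem card_ne_zero_le_weightCount {ℓ : ℕ} (hℓ : ℓ < Φ.L) :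
    (Finset.univ.filter fun ij : Fin (Φ.N (ℓ + 1)) × Fin (Φ.N ℓ) => Φ.A ℓ ij.1 ij.2 ≠ 0).card
      ≤ Φ.weightCount :=
  (Nat.le_add_right _ _).trans <| Finset.single_le_sum
    (f := fun ℓ => (Finset.univ.filter fun ij : Fin (Φ.N (ℓ + 1)) × Fin (Φ.N ℓ) =>
      Φ.A ℓ ij.1 ij.2 ≠ 0).card + (Finset.univ.filter fun i => Φ.b ℓ i ≠ 0).card)
    (fun _ _ => Nat.zero_le _) (Finset.mem_range.mpr hℓ)

/-- Alternating between the `ℓ^∞` and `ℓ^1` norms of the layer differences is what produces the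
exponent `⌊k/2⌋`: a matrix with at most `W` nonzero entries raises the `ℓ^1` norm above the
`ℓ^∞` norm by at most a factor `c W`, while the converse step costs only `c`. -/
theorem abs_hidden_sub_le (hd : 1 ≤ d) {c : ℝ} (hc : 0 ≤ c)
    (hA : ∀ ℓ < Φ.L, ∀ i j, |Φ.A ℓ i j| ≤ c) (x y : Fin d → ℝ) :
    ∀ k ≤ Φ.L,
      (∀ i, |Φ.hidden k x i - Φ.hidden k y i| ≤
        d * c ^ k * (Φ.weightCount : ℝ) ^ (k / 2) * dist x y) ∧
      ∑ i, |Φ.hidden k x i - Φ.hidden k y i| ≤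
        d * c ^ k * (Φ.weightCount : ℝ) ^ ((k + 1) / 2) * dist x y := by
  have hcoord : ∀ i, |Φ.hidden 0 x i - Φ.hidden 0 y i| ≤ dist x y := fun i => by
    simpa [hidden, ← Real.dist_eq] using dist_le_pi_dist x y _
  intro k
  induction k with
  | zero =>
    intro _
    refine ⟨fun i => (hcoord i).trans ?_, ?_⟩
    · simpa using le_mul_of_one_le_left dist_nonneg (by exact_mod_cast hd)
    · calc ∑ i, |Φ.hidden 0 x i - Φ.hidden 0 y i| ≤ ∑ _i : Fin (Φ.N 0), dist x y :=
            Finset.sum_le_sum fun i _ => hcoord i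
        _ = _ := by simp [Φ.hN0]
  | succ k ih =>
    intro hk
    obtain ⟨ih_sup, ih_sum⟩ := ih (by omega)
    have hlayer : ∀ i, |Φ.hidden (k + 1) x i - Φ.hidden (k + 1) y i| ≤
        |(Φ.A k).mulVec (Φ.hidden k x - Φ.hidden k y) i| := fun i =>
      (abs_relu_sub_relu_le _ _).trans_eq (by rw [Matrix.mulVec_sub, Pi.sub_apply]; ring_nf)
    constructor
    · intro i
      calc _ ≤ c * ∑ j, |Φ.hidden k x j - Φ.hidden k y j| :=
            (hlayer i).trans (abs_mulVec_apply_le (hA k hk) _ i)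
        _ ≤ c * (d * c ^ k * (Φ.weightCount : ℝ) ^ ((k + 1) / 2) * dist x y) :=
            mul_le_mul_of_nonneg_left ih_sum hc
        _ = _ := by ring
    · have hcard : ((Finset.univ.filter fun ij : Fin (Φ.N (k + 1)) × Fin (Φ.N k) =>
          Φ.A k ij.1 ij.2 ≠ 0).card : ℝ) ≤ Φ.weightCount :=
        by exact_mod_cast Φ.card_ne_zero_le_weightCount hk
      calc _ ≤ ∑ i, |(Φ.A k).mulVec (Φ.hidden k x - Φ.hidden k y) i| :=
            Finset.sum_le_sum fun i _ => hlayer i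
        _ ≤ c * Φ.weightCount * (d * c ^ k * (Φ.weightCount : ℝ) ^ (k / 2) * dist x y) := by
            refine (sum_abs_mulVec_le (hA k hk) hc ih_sup).trans ?_
            gcongr
        _ = _ := by rw [show (k + 1 + 1) / 2 = k / 2 + 1 by omega]; ring

theorem abs_realization_sub_le (hd : 1 ≤ d) {c : ℝ} (hc : 0 ≤ c)
    (hA : ∀ ℓ < Φ.L, ∀ i j, |Φ.A ℓ i j| ≤ c) (x y : Fin d → ℝ) :
    |Φ.realization x - Φ.realization y| ≤
      d * c ^ Φ.L * (Φ.weightCount : ℝ) ^ (Φ.L / 2) * dist x y := by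
  have hL : Φ.L - 1 < Φ.L := Nat.sub_lt Φ.hL one_pos
  have hlast := (Φ.abs_hidden_sub_le hd hc hA x y (Φ.L - 1) hL.le).2
  rw [Nat.sub_add_cancel Φ.hL] at hlast
  unfold realization
  rw [Pi.add_apply, Pi.add_apply, add_sub_add_right_eq_sub, ← Pi.sub_apply,
    ← Matrix.mulVec_sub]
  calc _ ≤ c * (d * c ^ (Φ.L - 1) * (Φ.weightCount : ℝ) ^ (Φ.L / 2) * dist x y) :=
        (abs_mulVec_apply_le (hA _ hL) _ _).trans (mul_le_mul_of_nonneg_left hlast hc)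
    _ = d * (c ^ (Φ.L - 1) * c) * (Φ.weightCount : ℝ) ^ (Φ.L / 2) * dist x y := by ring
    _ = _ := by rw [← pow_succ, Nat.sub_add_cancel Φ.hL]

end NeuralNet

section Growth

variable {ℓf : ℕ → ℕ∞} {cf : ℕ → ℝ≥0∞}

theorem ofReal_le_gammaStar {γ : ℝ} (hγ : 0 ≤ γ) {L : ℕ} (hL : 1 ≤ L)
    (hLℓ : (L : ℕ∞) ≤ lstar ℓf)
    (h : ∀ᶠ n : ℕ in atTop, (n : ℝ≥0∞) ^ γ ≤ cf n ^ L * (n : ℝ≥0∞) ^ (L / 2)) :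
    ENNReal.ofReal γ ≤ gammaStar ℓf cf := by
  refine le_sSup ⟨γ, hγ, rfl, L, hL, hLℓ, zero_lt_one.trans_le ?_⟩
  refine le_limsup_of_frequently_le (Eventually.frequently ?_)
  filter_upwards [h, eventually_ge_atTop 1] with n hn hn1
  have hn0 : (n : ℝ≥0∞) ≠ 0 := by exact_mod_cast (Nat.one_le_iff_ne_zero.mp hn1)
  rw [← ENNReal.div_self (ENNReal.rpow_pos (pos_iff_ne_zero.mpr hn0) (by simp)).ne'
    (ENNReal.rpow_ne_top_of_nonneg hγ (by simp))]
  exact ENNReal.div_le_div_right hn _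

theorem ne_top_of_gammaStar_ne_top (hcf : Monotone cf) (hℓ : 1 ≤ lstar ℓf)
    (hγ : gammaStar ℓf cf ≠ ⊤) (n : ℕ) : cf n ≠ ⊤ := by
  refine fun hn => hγ (ENNReal.eq_top_of_forall_nnreal_le fun r => ?_)
  simpa using ofReal_le_gammaStar r.2 le_rfl (by exact_mod_cast hℓ)
    ((eventually_ge_atTop n).mono fun m hm => by simp [top_unique (hn ▸ hcf hm)])

theorem lstar_ne_top_of_gammaStar_ne_top (hc : ∀ n, 1 ≤ cf n) (hγ : gammaStar ℓf cf ≠ ⊤) :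
    lstar ℓf ≠ ⊤ := by
  refine fun hℓ => hγ (ENNReal.eq_top_of_forall_nnreal_le fun r => ?_)
  obtain ⟨m, hm⟩ := exists_nat_ge (r : ℝ)
  refine (ENNReal.ofReal_coe_nnreal (p := r)).symm.trans_le <|
    ofReal_le_gammaStar r.2 (L := 2 * m + 1) (by omega) (by simp [hℓ]) ?_
  filter_upwards [eventually_ge_atTop 1] with n hn
  calc (n : ℝ≥0∞) ^ (r : ℝ) ≤ (n : ℝ≥0∞) ^ (m : ℝ) :=
        ENNReal.rpow_le_rpow_of_exponent_le (by exact_mod_cast hn) hm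
    _ = 1 * (n : ℝ≥0∞) ^ ((2 * m + 1) / 2) := by
        rw [one_mul, ENNReal.rpow_natCast, show (2 * m + 1) / 2 = m by omega]
    _ ≤ _ := by gcongr; exact one_le_pow₀ (hc n)

theorem eventually_le_of_gammaStar_lt {γ : ℝ} (hγ : gammaStar ℓf cf < ENNReal.ofReal γ)
    {L : ℕ} (hL : 1 ≤ L) (hLℓ : (L : ℕ∞) ≤ lstar ℓf) :
    ∀ᶠ n : ℕ in atTop, cf n ^ L * (n : ℝ≥0∞) ^ (L / 2) ≤ (n : ℝ≥0∞) ^ γ := by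
  have hγ0 : 0 < γ := ENNReal.ofReal_pos.mp (hγ.trans_le' bot_le)
  have hlimsup : limsup (fun n : ℕ => cf n ^ L * (n : ℝ≥0∞) ^ (L / 2) / (n : ℝ≥0∞) ^ γ)
      atTop < 1 := by
    refine lt_of_le_of_lt (le_of_not_gt fun hpos => ?_) zero_lt_one
    exact hγ.not_ge (le_sSup ⟨γ, hγ0.le, rfl, L, hL, hLℓ, hpos⟩)
  filter_upwards [eventually_lt_of_limsup_lt hlimsup, eventually_ge_atTop 1] with n hn hn1
  have hn0 : (n : ℝ≥0∞) ≠ 0 := by exact_mod_cast (Nat.one_le_iff_ne_zero.mp hn1)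
  rw [ENNReal.div_lt_iff (Or.inl (ENNReal.rpow_pos (pos_iff_ne_zero.mpr hn0) (by simp)).ne')
    (Or.inl (ENNReal.rpow_ne_top_of_nonneg hγ0.le (by simp))), one_mul] at hn
  exact hn.le

theorem exists_growth_bound (hcf : Monotone cf) (hc : ∀ n, 1 ≤ cf n) (hℓ : 1 ≤ lstar ℓf)
    {γ : ℝ} (hγ : gammaStar ℓf cf < ENNReal.ofReal γ) :
    ∃ C : ℝ≥0∞, 1 ≤ C ∧ C ≠ ⊤ ∧ ∀ n : ℕ, 1 ≤ n → ∀ L : ℕ, 1 ≤ L → (L : ℕ∞) ≤ lstar ℓf →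
      cf n ^ L * (n : ℝ≥0∞) ^ (L / 2) ≤ C * (n : ℝ≥0∞) ^ γ := by
  have hγ0 : 0 < γ := ENNReal.ofReal_pos.mp (hγ.trans_le' bot_le)
  set ℓs := (lstar ℓf).toNat
  have hℓs : ∀ L : ℕ, (L : ℕ∞) ≤ lstar ℓf ↔ L ≤ ℓs := fun L => by
    rw [← ENat.natCast_toNat (lstar_ne_top_of_gammaStar_ne_top hc hγ.ne_top), Nat.cast_le]
  obtain ⟨N, hN⟩ := eventually_atTop.mp <| (eventually_all_finset (Finset.Icc 1 ℓs)).mpr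
    fun L hL => eventually_le_of_gammaStar_lt hγ (Finset.mem_Icc.mp hL).1
      ((hℓs L).mpr (Finset.mem_Icc.mp hL).2)
  -- the finitely many `n < N` are absorbed into the constant
  set C := 1 + ∑ m ∈ Finset.range N, ∑ L ∈ Finset.range (ℓs + 1),
    cf m ^ L * (m : ℝ≥0∞) ^ (L / 2)
  refine ⟨C, le_self_add, ?_, fun n hn L hL hLℓ => ?_⟩
  · refine ENNReal.add_ne_top.mpr ⟨ENNReal.one_ne_top, ENNReal.sum_ne_top.mpr fun m _ =>
      ENNReal.sum_ne_top.mpr fun L _ => ENNReal.mul_ne_top ?_ (by simp)⟩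
    exact ENNReal.pow_ne_top (ne_top_of_gammaStar_ne_top hcf hℓ hγ.ne_top m)
  rcases lt_or_ge n N with hnN | hnN
  · calc cf n ^ L * (n : ℝ≥0∞) ^ (L / 2)
        ≤ ∑ L ∈ Finset.range (ℓs + 1), cf n ^ L * (n : ℝ≥0∞) ^ (L / 2) :=
          Finset.single_le_sum (f := fun L => cf n ^ L * (n : ℝ≥0∞) ^ (L / 2))
            (fun _ _ => zero_le) (Finset.mem_range.mpr (Nat.lt_succ_of_le ((hℓs L).mp hLℓ)))
      _ ≤ ∑ m ∈ Finset.range N, ∑ L ∈ Finset.range (ℓs + 1),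
            cf m ^ L * (m : ℝ≥0∞) ^ (L / 2) :=
          Finset.single_le_sum (f := fun m => ∑ L ∈ Finset.range (ℓs + 1),
            cf m ^ L * (m : ℝ≥0∞) ^ (L / 2)) (fun _ _ => zero_le) (Finset.mem_range.mpr hnN)
      _ ≤ C := le_add_self
      _ ≤ C * (n : ℝ≥0∞) ^ γ :=
          le_mul_of_one_le_right' (ENNReal.one_le_rpow (Nat.one_le_cast.mpr hn) hγ0)
  · calc cf n ^ L * (n : ℝ≥0∞) ^ (L / 2) ≤ (n : ℝ≥0∞) ^ γ :=
          hN n hnN L (Finset.mem_Icc.mpr ⟨hL, (hℓs L).mp hLℓ⟩)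
      _ ≤ C * (n : ℝ≥0∞) ^ γ := le_mul_of_one_le_left' le_self_add

end Growth

theorem abs_sub_le_of_mem_NNSet {d : ℕ} (hd : 1 ≤ d) {ℓf : ℕ → ℕ∞} {cf : ℕ → ℝ≥0∞} {n : ℕ}
    (hn : 1 ≤ n) {K : ℝ≥0∞} (hK : K ≠ ⊤)
    (hbound : ∀ L : ℕ, 1 ≤ L → (L : ℕ∞) ≤ ℓf n → cf n ^ L * (n : ℝ≥0∞) ^ (L / 2) ≤ K)
    {G : (Fin d → ℝ) → ℝ} (hG : G ∈ NNSet d ℓf cf n) (x y : Fin d → ℝ) :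
    |G x - G y| ≤ d * K.toReal * dist x y := by
  obtain ⟨Φ, rfl, hW, hL, hA⟩ := hG
  have hΦ := hbound Φ.L Φ.hL hL
  have hc : cf n ≠ ⊤ := by
    intro hc
    have hn0 : (n : ℝ≥0∞) ≠ 0 := by exact_mod_cast (Nat.one_le_iff_ne_zero.mp hn)
    simp [hc, Φ.hL.ne', hn0] at hΦ
    exact hK hΦ
  have hAc : ∀ ℓ < Φ.L, ∀ i j, |Φ.A ℓ i j| ≤ (cf n).toReal := fun ℓ hℓ i j =>
    (ENNReal.ofReal_le_iff_le_toReal hc).mp ((hA ℓ hℓ).1 i j)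
  have hgrowth : (cf n).toReal ^ Φ.L * (n : ℝ) ^ (Φ.L / 2) ≤ K.toReal := by
    simpa [ENNReal.toReal_mul, ENNReal.toReal_pow] using ENNReal.toReal_mono hK hΦ
  calc |Φ.realization x - Φ.realization y|
      ≤ d * (cf n).toReal ^ Φ.L * (Φ.weightCount : ℝ) ^ (Φ.L / 2) * dist x y :=
        Φ.abs_realization_sub_le hd ENNReal.toReal_nonneg hAc x y
    _ ≤ d * ((cf n).toReal ^ Φ.L * (n : ℝ) ^ (Φ.L / 2)) * dist x y := by
        rw [← mul_assoc]; gcongr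
    _ ≤ d * K.toReal * dist x y := by gcongr

theorem abs_sub_le_of_mem_NNSet_two_pow {d : ℕ} (hd : 1 ≤ d) {ℓf : ℕ → ℕ∞}
    {cf : ℕ → ℝ≥0∞} {γ : ℝ} {C : ℝ≥0∞} (hC : C ≠ ⊤)
    (hgrowth : ∀ n : ℕ, 1 ≤ n → ∀ L : ℕ, 1 ≤ L → (L : ℕ∞) ≤ ℓf n →
      cf n ^ L * (n : ℝ≥0∞) ^ (L / 2) ≤ C * (n : ℝ≥0∞) ^ γ)
    {k : ℕ} {G : (Fin d → ℝ) → ℝ} (hG : G ∈ NNSet d ℓf cf (2 ^ k)) (x y : Fin d → ℝ) :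
    |G x - G y| ≤ d * C.toReal * ((2 : ℝ) ^ γ) ^ k * dist x y := by
  have hK : (C * ((2 ^ k : ℕ) : ℝ≥0∞) ^ γ).toReal = C.toReal * ((2 : ℝ) ^ γ) ^ k := by
    rw [ENNReal.toReal_mul, ← ENNReal.toReal_rpow]
    simp [Real.rpow_pow_comm zero_le_two]
  rw [mul_assoc (d : ℝ), ← hK]
  exact abs_sub_le_of_mem_NNSet hd Nat.one_le_two_pow
    (ENNReal.mul_ne_top hC (ENNReal.rpow_ne_top_of_ne_zero (by simp) (by simp)))
    (fun L hL hLℓ => hgrowth _ Nat.one_le_two_pow L hL hLℓ) hG x y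

theorem volume_unitCube (d : ℕ) : volume (unitCube d) = 1 := by
  simp [unitCube, Real.volume_Icc_pi]

theorem exists_subset_unitCube_volume_eq {d : ℕ} {x₀ : Fin d → ℝ} (hx₀ : x₀ ∈ unitCube d)
    {r : ℝ} (hr0 : 0 ≤ r) (hr1 : r ≤ 1) :
    ∃ Q ⊆ unitCube d, MeasurableSet Q ∧ volume Q = ENNReal.ofReal r ^ d ∧
      ∀ y ∈ Q, dist y x₀ ≤ r := by
  have hx : ∀ j, 0 ≤ x₀ j ∧ x₀ j ≤ 1 := fun j => ⟨hx₀.1 j, hx₀.2 j⟩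
  set a : Fin d → ℝ := fun j => min (x₀ j) (1 - r)
  have ha : ∀ j, x₀ j - r ≤ a j ∧ a j ≤ x₀ j ∧ 0 ≤ a j ∧ a j + r ≤ 1 := fun j =>
    ⟨le_min (by linarith) (by linarith [(hx j).2]), min_le_left _ _,
      le_min (hx j).1 (by linarith), by linarith [min_le_right (x₀ j) (1 - r)]⟩
  refine ⟨Set.Icc a (a + fun _ => r), fun y hy => ⟨fun j => ?_, fun j => ?_⟩,
    measurableSet_Icc, by simp [Real.volume_Icc_pi], fun y hy => ?_⟩
  · exact (ha j).2.2.1.trans (hy.1 j)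
  · exact (hy.2 j).trans (ha j).2.2.2
  · refine (dist_pi_le_iff hr0).mpr fun j => ?_
    rw [Real.dist_eq, abs_le]
    have hy1 : a j ≤ y j := hy.1 j
    have hy2 : y j ≤ a j + r := hy.2 j
    constructor <;> linarith [(ha j).1, (ha j).2.1]

theorem ofReal_mul_rpow_le_eLpNorm {α : Type*} [MeasurableSpace α] {μ : Measure α}
    {p : ℝ≥0∞} (hp0 : p ≠ 0) (hp : p ≠ ⊤) {Ω Q : Set α} (hQΩ : Q ⊆ Ω) (hQ : MeasurableSet Q)
    {h : α → ℝ} {m : ℝ} (hm0 : 0 ≤ m) (hm : ∀ y ∈ Q, m ≤ |h y|) :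
    ENNReal.ofReal m * μ Q ^ (1 / p.toReal) ≤ eLpNorm h p (μ.restrict Ω) :=
  calc ENNReal.ofReal m * μ Q ^ (1 / p.toReal) = eLpNorm (fun _ => m) p (μ.restrict Q) := by
        rw [eLpNorm_const' _ hp0 hp, Measure.restrict_apply_univ, Real.enorm_eq_ofReal hm0]
    _ ≤ eLpNorm h p (μ.restrict Q) := by
        refine eLpNorm_mono_ae ((ae_restrict_mem hQ).mono fun y hy => ?_)
        simpa [abs_of_nonneg hm0] using hm y hy
    _ ≤ eLpNorm h p (μ.restrict Ω) := eLpNorm_mono_measure _ (Measure.restrict_mono hQΩ le_rfl)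

/-- The bound on `sup |h|` for a `Λ`-Lipschitz function `h` with `‖h‖_{L^p} ≤ ε` on a
`d`-dimensional cube, written with `s = d/p`. -/
noncomputable def supBound (s ε Λ : ℝ) : ℝ := 2 * ε + 2 * (ε * Λ ^ s) ^ (1 + s)⁻¹

theorem le_supBound {s M ε Λ : ℝ} (hs : 0 ≤ s) (hM : 0 ≤ M) (hΛ : 0 < Λ)
    (h : M / 2 * min 1 (M / (2 * Λ)) ^ s ≤ ε) : M ≤ supBound s ε Λ := by
  have hε : 0 ≤ ε := h.trans' (by positivity)
  have hsecond : 0 ≤ 2 * (ε * Λ ^ s) ^ (1 + s)⁻¹ := by positivity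
  unfold supBound
  rcases le_total 1 (M / (2 * Λ)) with hcase | hcase
  · rw [min_eq_left hcase, Real.one_rpow, mul_one] at h
    linarith
  · rw [min_eq_right hcase, show M / (2 * Λ) = M / 2 / Λ by ring,
      Real.div_rpow (by positivity) hΛ.le] at h
    have hpow : (M / 2) ^ (1 + s) ≤ ε * Λ ^ s := by
      rw [Real.rpow_add' (by positivity) (by positivity), Real.rpow_one]
      calc M / 2 * (M / 2) ^ s = M / 2 * ((M / 2) ^ s / Λ ^ s) * Λ ^ s := by
            field_simp
        _ ≤ ε * Λ ^ s := by gcongr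
    have := (Real.le_rpow_inv_iff_of_pos (by positivity) (by positivity)
      (by positivity)).mpr hpow
    linarith

theorem supBound_mul_pow_le {s ε Λ a q : ℝ} (hε : 0 ≤ ε) (hΛ : 0 ≤ Λ)
    (ha : 0 ≤ a) (hq : 0 ≤ q) (k : ℕ) :
    supBound s (ε * a ^ k) (Λ * q ^ k) ≤
      supBound s ε Λ * max a ((a * q ^ s) ^ (1 + s)⁻¹) ^ k := by
  have hsplit : (ε * a ^ k * (Λ * q ^ k) ^ s) ^ (1 + s)⁻¹ =
      (ε * Λ ^ s) ^ (1 + s)⁻¹ * ((a * q ^ s) ^ (1 + s)⁻¹) ^ k := by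
    rw [Real.mul_rpow hΛ (by positivity), ← Real.rpow_pow_comm hq,
      show ε * a ^ k * (Λ ^ s * (q ^ s) ^ k) = ε * Λ ^ s * (a * q ^ s) ^ k by ring,
      Real.mul_rpow (by positivity) (by positivity), ← Real.rpow_pow_comm (by positivity)]
  set ρ := max a ((a * q ^ s) ^ (1 + s)⁻¹)
  calc supBound s (ε * a ^ k) (Λ * q ^ k)
      = 2 * (ε * a ^ k) + 2 * ((ε * Λ ^ s) ^ (1 + s)⁻¹ * ((a * q ^ s) ^ (1 + s)⁻¹) ^ k) := by
        rw [supBound, hsplit]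
    _ ≤ 2 * (ε * ρ ^ k) + 2 * ((ε * Λ ^ s) ^ (1 + s)⁻¹ * ρ ^ k) := by
        gcongr
        · exact le_max_left _ _
        · exact le_max_right _ _
    _ = supBound s ε Λ * ρ ^ k := by rw [supBound]; ring

theorem exists_continuousOn_tendsto_of_abs_sub_le_geometric {X : Type*} [TopologicalSpace X]
    {s : Set X} {G : ℕ → X → ℝ} (hG : ∀ k, ContinuousOn (G k) s) {C ρ : ℝ} (hρ0 : 0 ≤ ρ)
    (hρ1 : ρ < 1) (hstep : ∀ k, ∀ x ∈ s, |G (k + 1) x - G k x| ≤ C * ρ ^ k) :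
    ∃ g : X → ℝ, ContinuousOn g s ∧ (∀ x ∈ s, Tendsto (fun k => G k x) atTop (𝓝 (g x))) ∧
      ∀ x ∈ s, |g x - G 0 x| ≤ C / (1 - ρ) := by
  have hdist : ∀ x ∈ s, ∀ k, dist (G k x) (G (k + 1) x) ≤ C * ρ ^ k := fun x hx k => by
    rw [Real.dist_eq, abs_sub_comm]; exact hstep k x hx
  have hlim : ∀ x ∈ s, Tendsto (fun k => G k x) atTop (𝓝 (limUnder atTop fun k => G k x)) :=
    fun x hx => (cauchySeq_of_le_geometric ρ C hρ1 (hdist x hx)).tendsto_limUnder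
  have hrate : ∀ x ∈ s, ∀ k, dist (G k x) (limUnder atTop fun k => G k x) ≤
      C * ρ ^ k / (1 - ρ) := fun x hx =>
    dist_le_of_le_geometric_of_tendsto ρ C hρ1 (hdist x hx) (hlim x hx)
  refine ⟨fun x => limUnder atTop fun k => G k x, ?_, hlim, fun x hx => ?_⟩
  · have hrate0 : Tendsto (fun k : ℕ => C * ρ ^ k / (1 - ρ)) atTop (𝓝 0) := by
      simpa using ((tendsto_pow_atTop_nhds_zero_of_lt_one hρ0 hρ1).const_mul C).div_const
        (1 - ρ)
    refine TendstoUniformlyOn.continuousOn (F := G) (p := atTop) ?_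
      (Eventually.of_forall hG).frequently
    refine Metric.tendstoUniformlyOn_iff.mpr fun δ hδ => ?_
    filter_upwards [hrate0.eventually (gt_mem_nhds hδ)] with k hk x hx
    rw [dist_comm]
    exact (hrate x hx k).trans_lt hk
  · simpa [Real.dist_eq, abs_sub_comm] using hrate x hx 0

theorem ae_eq_of_tendsto_eLpNorm_of_tendsto_ae {α E : Type*} [MeasurableSpace α]
    {μ : Measure α} [IsFiniteMeasure μ] [NormedAddCommGroup E] {p : ℝ≥0∞} (hp : p ≠ 0)
    {G : ℕ → α → E} {F g : α → E} (hG : ∀ k, AEStronglyMeasurable (G k) μ)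
    (hF : AEStronglyMeasurable F μ)
    (hLp : Tendsto (fun k => eLpNorm (G k - F) p μ) atTop (𝓝 0))
    (hae : ∀ᵐ x ∂μ, Tendsto (fun k => G k x) atTop (𝓝 (g x))) : F =ᵐ[μ] g :=
  tendstoInMeasure_ae_unique (tendstoInMeasure_of_tendsto_eLpNorm hp hG hF hLp)
    (tendstoInMeasure_of_tendsto_ae hG hae)

section Cube

variable {d : ℕ} {p : ℝ}

theorem half_mul_min_rpow_le (hp : 0 < p) {h : (Fin d → ℝ) → ℝ} {Λ : ℝ} (hΛ : 0 < Λ)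
    (hlip : ∀ x y, |h x - h y| ≤ Λ * dist x y) {ε : ℝ} (hε0 : 0 ≤ ε)
    (hε : eLpNorm h (ENNReal.ofReal p) (volume.restrict (unitCube d)) ≤ ENNReal.ofReal ε)
    {x₀ : Fin d → ℝ} (hx₀ : x₀ ∈ unitCube d) :
    |h x₀| / 2 * min 1 (|h x₀| / (2 * Λ)) ^ ((d : ℝ) / p) ≤ ε := by
  set M := |h x₀|
  set r := min 1 (M / (2 * Λ))
  have hr0 : 0 ≤ r := le_min zero_le_one (by positivity)
  obtain ⟨Q, hQΩ, hQ, hvol, hdist⟩ := exists_subset_unitCube_volume_eq hx₀ hr0 (min_le_left _ _)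
  have hlow : ∀ y ∈ Q, M / 2 ≤ |h y| := fun y hy => by
    have h1 : |h x₀ - h y| ≤ Λ * r :=
      (hlip x₀ y).trans (by rw [dist_comm]; gcongr; exact hdist y hy)
    have h2 : Λ * r ≤ M / 2 := by
      calc Λ * r ≤ Λ * (M / (2 * Λ)) := by gcongr; exact min_le_right _ _
        _ = M / 2 := by field_simp
    linarith [abs_sub_abs_le_abs_sub (h x₀) (h y)]
  have key := (ofReal_mul_rpow_le_eLpNorm (ENNReal.ofReal_pos.mpr hp).ne' ENNReal.ofReal_ne_top
    hQΩ hQ (by positivity) hlow).trans hε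
  rwa [hvol, ENNReal.toReal_ofReal hp.le, ← ENNReal.ofReal_pow hr0,
    ENNReal.ofReal_rpow_of_nonneg (by positivity) (by positivity), ← Real.rpow_natCast,
    ← Real.rpow_mul hr0, ← ENNReal.ofReal_mul (by positivity),
    ENNReal.ofReal_le_ofReal_iff hε0, mul_one_div] at key

theorem abs_le_supBound (hp : 0 < p) {h : (Fin d → ℝ) → ℝ} {Λ : ℝ} (hΛ : 0 < Λ)
    (hlip : ∀ x y, |h x - h y| ≤ Λ * dist x y) {ε : ℝ} (hε0 : 0 ≤ ε)
    (hε : eLpNorm h (ENNReal.ofReal p) (volume.restrict (unitCube d)) ≤ ENNReal.ofReal ε)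
    {x₀ : Fin d → ℝ} (hx₀ : x₀ ∈ unitCube d) :
    |h x₀| ≤ supBound ((d : ℝ) / p) ε Λ :=
  le_supBound (by positivity) (abs_nonneg _) hΛ (half_mul_min_rpow_le hp hΛ hlip hε0 hε hx₀)

theorem abs_succ_sub_le_of_approx (hp : 0 < p) {Λ q ε a : ℝ} (hΛ : 0 < Λ) (hq : 1 ≤ q)
    (hε : 0 ≤ ε) (ha0 : 0 ≤ a) (ha1 : a ≤ 1) {F : (Fin d → ℝ) → ℝ}
    (hF : AEStronglyMeasurable F (volume.restrict (unitCube d)))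
    {H : ℕ → (Fin d → ℝ) → ℝ} (hHc : ∀ k, Continuous (H k))
    (hLip : ∀ k x y, |H k x - H k y| ≤ Λ * q ^ k * dist x y)
    (hLp : ∀ k, eLpNorm (F - H k) (ENNReal.ofReal p) (volume.restrict (unitCube d)) ≤
      ENNReal.ofReal (ε * a ^ k)) (k : ℕ) {x : Fin d → ℝ} (hx : x ∈ unitCube d) :
    |H (k + 1) x - H k x| ≤
      supBound ((d : ℝ) / p) (2 * (ENNReal.LpAddConst (ENNReal.ofReal p)).toReal * ε)
        (2 * Λ * q) * max a ((a * q ^ ((d : ℝ) / p)) ^ (1 + (d : ℝ) / p)⁻¹) ^ k := by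
  set K := (ENNReal.LpAddConst (ENNReal.ofReal p)).toReal
  have hK : ENNReal.LpAddConst (ENNReal.ofReal p) = ENNReal.ofReal K :=
    (ENNReal.ofReal_toReal (ENNReal.LpAddConst_lt_top _).ne).symm
  have hLipk : ∀ x y, |(H (k + 1) - H k) x - (H (k + 1) - H k) y| ≤
      2 * Λ * q * q ^ k * dist x y := fun x y => by
    have hq' : Λ * q ^ k * dist x y ≤ Λ * q * q ^ k * dist x y := by
      rw [mul_assoc Λ q]; gcongr; exact le_mul_of_one_le_left (by positivity) hq
    calc _ = |(H (k + 1) x - H (k + 1) y) - (H k x - H k y)| := by simp only [Pi.sub_apply]; ring_nf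
      _ ≤ |H (k + 1) x - H (k + 1) y| + |H k x - H k y| := abs_sub _ _
      _ ≤ Λ * q ^ (k + 1) * dist x y + Λ * q ^ k * dist x y :=
          add_le_add (hLip _ _ _) (hLip _ _ _)
      _ ≤ 2 * Λ * q * q ^ k * dist x y := by rw [pow_succ]; linarith
  have hLpk : eLpNorm (H (k + 1) - H k) (ENNReal.ofReal p) (volume.restrict (unitCube d)) ≤
      ENNReal.ofReal (2 * K * ε * a ^ k) := by
    calc _ = eLpNorm ((F - H k) - (F - H (k + 1))) (ENNReal.ofReal p)
          (volume.restrict (unitCube d)) := by congr 1; abel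
      _ ≤ ENNReal.ofReal K * (ENNReal.ofReal (ε * a ^ k) + ENNReal.ofReal (ε * a ^ (k + 1))) :=
          hK ▸ (eLpNorm_sub_le' (hF.sub (hHc k).aestronglyMeasurable)
            (hF.sub (hHc (k + 1)).aestronglyMeasurable) _).trans (by gcongr <;> apply hLp)
      _ ≤ ENNReal.ofReal K * ENNReal.ofReal (2 * ε * a ^ k) := by
          rw [← ENNReal.ofReal_add (by positivity) (by positivity)]
          gcongr
          have : a ^ (k + 1) ≤ a ^ k := pow_le_pow_of_le_one ha0 ha1 k.le_succ
          linarith [mul_le_mul_of_nonneg_left this hε]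
      _ = ENNReal.ofReal (2 * K * ε * a ^ k) := by
          rw [← ENNReal.ofReal_mul ENNReal.toReal_nonneg]; congr 1; ring
  exact (abs_le_supBound hp (by positivity) hLipk (by positivity) hLpk hx).trans
    (supBound_mul_pow_le (by positivity) (by positivity) ha0 (by positivity) k)

theorem exists_continuousOn_ae_eq_of_approx (hp : 0 < p) {Λ q ε a : ℝ} (hΛ : 0 < Λ)
    (hq : 1 ≤ q) (hε : 0 ≤ ε) (ha0 : 0 ≤ a) (ha1 : a < 1) (haq : a * q ^ ((d : ℝ) / p) < 1) :
    ∃ S : ℝ, 0 < S ∧ ∀ (F : (Fin d → ℝ) → ℝ) (H : ℕ → (Fin d → ℝ) → ℝ),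
      AEStronglyMeasurable F (volume.restrict (unitCube d)) → H 0 = 0 →
      (∀ k, Continuous (H k)) → (∀ k x y, |H k x - H k y| ≤ Λ * q ^ k * dist x y) →
      (∀ k, eLpNorm (F - H k) (ENNReal.ofReal p) (volume.restrict (unitCube d)) ≤
        ENNReal.ofReal (ε * a ^ k)) →
      ∃ g, ContinuousOn g (unitCube d) ∧ F =ᵐ[volume.restrict (unitCube d)] g ∧
        ∀ x ∈ unitCube d, |g x| ≤ S := by
  set ρ := max a ((a * q ^ ((d : ℝ) / p)) ^ (1 + (d : ℝ) / p)⁻¹)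
  have hρ0 : 0 ≤ ρ := le_max_of_le_left ha0
  have hρ1 : ρ < 1 := max_lt ha1 (Real.rpow_lt_one (by positivity) haq (by positivity))
  refine ⟨max (supBound ((d : ℝ) / p) (2 * (ENNReal.LpAddConst (ENNReal.ofReal p)).toReal * ε)
    (2 * Λ * q) / (1 - ρ)) 1, by positivity, fun F H hF hH0 hHc hLip hLp => ?_⟩
  obtain ⟨g, hg, hlim, hbound⟩ := exists_continuousOn_tendsto_of_abs_sub_le_geometric
    (fun k => (hHc k).continuousOn) hρ0 hρ1 fun k x hx =>
      abs_succ_sub_le_of_approx hp hΛ hq hε ha0 ha1.le hF hHc hLip hLp k hx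
  refine ⟨g, hg, ?_, fun x hx => le_max_of_le_left (by simpa [hH0] using hbound x hx)⟩
  have : IsFiniteMeasure (volume.restrict (unitCube d)) := ⟨by simp [volume_unitCube]⟩
  refine ae_eq_of_tendsto_eLpNorm_of_tendsto_ae (ENNReal.ofReal_pos.mpr hp).ne'
    (fun k => (hHc k).aestronglyMeasurable) hF ?_ ((ae_restrict_mem measurableSet_Icc).mono hlim)
  refine tendsto_of_tendsto_of_tendsto_of_le_of_le tendsto_const_nhds ?_ (fun _ => zero_le)
    fun k => (eLpNorm_sub_comm _ _ _ _).trans_le (hLp k)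
  simpa using ENNReal.tendsto_ofReal ((tendsto_pow_atTop_nhds_zero_of_lt_one ha0 ha1).const_mul ε)

end Cube

theorem exists_mem_NNSet_eLpNorm_sub_le {d : ℕ} {ℓf : ℕ → ℕ∞} {cf : ℕ → ℝ≥0∞}
    {Ω : Set (Fin d → ℝ)} {p : ℝ≥0∞} {α : ℝ} {F : (Fin d → ℝ) → ℝ}
    (hΓ : Gamma d ℓf cf Ω p α F ≤ 1) {n : ℕ} (hn : 1 ≤ n) :
    ∃ G ∈ NNSet d ℓf cf n,
      eLpNorm (F - G) p (volume.restrict Ω) ≤ ENNReal.ofReal (2 * (n : ℝ) ^ (-α)) := by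
  obtain ⟨m, rfl⟩ : ∃ m, n = m + 1 := ⟨n - 1, by omega⟩
  have h := (le_iSup (fun m : ℕ => ((m + 1 : ℕ) : ℝ≥0∞) ^ α *
    dLp d Ω p F (NNSet d ℓf cf (m + 1))) m).trans ((le_max_right _ _).trans hΓ)
  have hdist : dLp d Ω p F (NNSet d ℓf cf (m + 1)) <
      ENNReal.ofReal (2 * ((m + 1 : ℕ) : ℝ) ^ (-α)) := by
    calc dLp d Ω p F (NNSet d ℓf cf (m + 1)) ≤ (((m + 1 : ℕ) : ℝ≥0∞) ^ α)⁻¹ :=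
          ENNReal.le_inv_iff_mul_le.mpr (by rwa [mul_comm])
      _ = ENNReal.ofReal (((m + 1 : ℕ) : ℝ) ^ (-α)) := by
          rw [← ENNReal.rpow_neg, ← ENNReal.ofReal_natCast,
            ENNReal.ofReal_rpow_of_pos (by positivity)]
      _ < ENNReal.ofReal (2 * ((m + 1 : ℕ) : ℝ) ^ (-α)) := by
          have := Real.rpow_pos_of_pos (show (0 : ℝ) < ((m + 1 : ℕ) : ℝ) by positivity) (-α)
          exact (ENNReal.ofReal_lt_ofReal_iff (by positivity)).mpr (by linarith)
  simp only [dLp, iInf_lt_iff] at hdist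
  obtain ⟨G, hG, hlt⟩ := hdist
  exact ⟨G, hG, hlt.le⟩

theorem exists_continuousOn_ae_eq_of_Gamma_le_one {d : ℕ} (hd : 1 ≤ d) {ℓf : ℕ → ℕ∞}
    {cf : ℕ → ℝ≥0∞} {p α γ : ℝ} (hp : 0 < p) (hγ : 0 ≤ γ) (hγα : (d : ℝ) / p * γ < α)
    {C : ℝ≥0∞} (hC1 : 1 ≤ C) (hC : C ≠ ⊤)
    (hgrowth : ∀ n : ℕ, 1 ≤ n → ∀ L : ℕ, 1 ≤ L → (L : ℕ∞) ≤ ℓf n →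
      cf n ^ L * (n : ℝ≥0∞) ^ (L / 2) ≤ C * (n : ℝ≥0∞) ^ γ) :
    ∃ S : ℝ, 0 < S ∧ ∀ F : (Fin d → ℝ) → ℝ,
      AEStronglyMeasurable F (volume.restrict (unitCube d)) →
      Gamma d ℓf cf (unitCube d) (ENNReal.ofReal p) α F ≤ 1 →
      ∃ g, ContinuousOn g (unitCube d) ∧ F =ᵐ[volume.restrict (unitCube d)] g ∧
        ∀ x ∈ unitCube d, |g x| ≤ S := by
  set a := (2 : ℝ) ^ (-α)
  set q := (2 : ℝ) ^ γ
  have ha0 : 0 < a := by positivity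
  have ha1 : a < 1 := Real.rpow_lt_one_of_one_lt_of_neg one_lt_two (by
    nlinarith [show 0 ≤ (d : ℝ) / p by positivity])
  have hq : 1 ≤ q := Real.one_le_rpow one_le_two hγ
  have haq : a * q ^ ((d : ℝ) / p) < 1 := by
    rw [← Real.rpow_mul zero_le_two, ← Real.rpow_add two_pos]
    exact Real.rpow_lt_one_of_one_lt_of_neg one_lt_two (by linarith)
  have hC0 : 0 < C.toReal := ENNReal.toReal_pos (one_pos.trans_le hC1).ne' hC
  obtain ⟨S, hS0, hS⟩ := exists_continuousOn_ae_eq_of_approx hp (Λ := d * C.toReal)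
    (by positivity) hq (ε := 2 / a) (by positivity) ha0.le ha1 haq
  refine ⟨S, hS0, fun F hF hΓ => ?_⟩
  choose G hG hFG using fun k : ℕ =>
    exists_mem_NNSet_eLpNorm_sub_le hΓ (Nat.one_le_two_pow (n := k))
  -- `H 0 = 0` turns the bound on `|g - H 0|` into a bound on `|g|`
  let H : ℕ → (Fin d → ℝ) → ℝ := fun k => Nat.casesOn k 0 G
  refine hS F H hF rfl (fun k => ?_) (fun k x y => ?_) (fun k => ?_)
  · rcases k with _ | k
    · exact continuous_const
    · obtain ⟨Φ, hΦ, -⟩ := hG k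
      show Continuous (G k)
      exact hΦ ▸ Φ.continuous_realization
  · rcases k with _ | k
    · show |(0 : ℝ) - 0| ≤ _
      rw [sub_zero, abs_zero]
      positivity
    · refine (abs_sub_le_of_mem_NNSet_two_pow hd hC hgrowth (hG k) x y).trans ?_
      gcongr
      exact k.le_succ
  · rcases k with _ | k
    · calc eLpNorm (F - 0) _ _ ≤ 1 := by rw [sub_zero]; exact (le_max_left _ _).trans hΓ
        _ ≤ ENNReal.ofReal (2 / a * a ^ 0) := by
            rw [pow_zero, mul_one, ENNReal.one_le_ofReal, le_div_iff₀ ha0]; linarith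
    · refine (hFG k).trans_eq (congrArg ENNReal.ofReal ?_)
      rw [Nat.cast_pow, Nat.cast_ofNat, ← Real.rpow_pow_comm zero_le_two, pow_succ]
      field_simp
      rfl

theorem exists_ofReal_gt_of_ofReal_mul_lt {x : ℝ≥0∞} (hx : x ≠ ⊤) {c α : ℝ} (hc : 0 ≤ c)
    (h : ENNReal.ofReal c * x < ENNReal.ofReal α) :
    ∃ γ : ℝ, 0 ≤ γ ∧ x < ENNReal.ofReal γ ∧ c * γ < α := by
  rw [← ENNReal.ofReal_toReal hx, ← ENNReal.ofReal_mul hc, ENNReal.ofReal_lt_ofReal_iff'] at h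
  obtain ⟨γ, hxγ, hγ⟩ :=
    (((continuous_const_mul c).tendsto x.toReal).eventually (gt_mem_nhds h.1)).exists_gt
  exact ⟨γ, ENNReal.toReal_nonneg.trans hxγ.le, (ENNReal.lt_ofReal_iff_toReal_lt hx).mpr hxγ, hγ⟩

theorem le_mul_ANorm {d : ℕ} {ℓf : ℕ → ℕ∞} {cf : ℕ → ℝ≥0∞} {Ω : Set (Fin d → ℝ)}
    {p : ℝ≥0∞} {α : ℝ} {f : (Fin d → ℝ) → ℝ} {X : ℝ≥0∞} {S : ℝ} (hS : 0 < S)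
    (h : ∀ θ : ℝ, 0 < θ → Gamma d ℓf cf Ω p α (fun x => f x / θ) ≤ 1 →
      X ≤ ENNReal.ofReal S * ENNReal.ofReal θ) :
    X ≤ ENNReal.ofReal S * ANorm d ℓf cf Ω p α f := by
  have hS0 : ENNReal.ofReal S ≠ 0 := (ENNReal.ofReal_pos.mpr hS).ne'
  rw [mul_comm, ← ENNReal.div_le_iff hS0 ENNReal.ofReal_ne_top]
  refine le_sInf ?_
  rintro _ ⟨θ, hθ, rfl, hΓ⟩
  rw [ENNReal.div_le_iff hS0 ENNReal.ofReal_ne_top, mul_comm]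
  exact h θ hθ hΓ

theorem eLpNorm_top_restrict_le_of_ae_eq {α : Type*} [MeasurableSpace α] {μ : Measure α}
    {Ω : Set α} (hΩ : MeasurableSet Ω) {f g : α → ℝ} {θ S : ℝ} (hθ : 0 < θ)
    (hfg : (fun x => f x / θ) =ᵐ[μ.restrict Ω] g) (hgS : ∀ x ∈ Ω, |g x| ≤ S) :
    eLpNorm f ⊤ (μ.restrict Ω) ≤ ENNReal.ofReal S * ENNReal.ofReal θ := by
  rw [eLpNorm_exponent_top, ← ENNReal.ofReal_mul' hθ.le]
  refine eLpNormEssSup_le_of_ae_bound ?_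
  filter_upwards [hfg, ae_restrict_mem hΩ] with x hx hxΩ
  rw [Real.norm_eq_abs, ← div_mul_cancel₀ (f x) hθ.ne', abs_mul, abs_of_pos hθ, hx]
  exact mul_le_mul_of_nonneg_right (hgS x hxΩ) hθ.le

/-- The approximation-space quasi-norm is the gauge of `{F | Γ(F) ≤ 1}`, so a bound on that set
extends to all of `A^α` by homogeneity. -/
theorem exists_continuousOn_ae_eq_and_eLpNorm_top_le {d : ℕ} {ℓf : ℕ → ℕ∞} {cf : ℕ → ℝ≥0∞}
    {p : ℝ≥0∞} {α S : ℝ} (hS0 : 0 < S)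
    (hS : ∀ F : (Fin d → ℝ) → ℝ, AEStronglyMeasurable F (volume.restrict (unitCube d)) →
      Gamma d ℓf cf (unitCube d) p α F ≤ 1 →
      ∃ g, ContinuousOn g (unitCube d) ∧ F =ᵐ[volume.restrict (unitCube d)] g ∧
        ∀ x ∈ unitCube d, |g x| ≤ S)
    {f : (Fin d → ℝ) → ℝ} (hf : MemA d ℓf cf (unitCube d) p α f) :
    (∃ g, ContinuousOn g (unitCube d) ∧ f =ᵐ[volume.restrict (unitCube d)] g) ∧
      eLpNorm f ⊤ (volume.restrict (unitCube d)) ≤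
        ENNReal.ofReal S * ANorm d ℓf cf (unitCube d) p α f := by
  have hrep : ∀ θ : ℝ, 0 < θ → Gamma d ℓf cf (unitCube d) p α (fun x => f x / θ) ≤ 1 →
      ∃ g, ContinuousOn g (unitCube d) ∧ (fun x => f x / θ) =ᵐ[volume.restrict (unitCube d)] g ∧
        ∀ x ∈ unitCube d, |g x| ≤ S := fun θ _ hΓ =>
    hS _ (by simpa only [div_eq_mul_inv] using hf.1.aestronglyMeasurable.mul_const θ⁻¹) hΓ
  obtain ⟨_, ⟨θ, hθ, rfl, hΓ⟩, -⟩ := sInf_lt_iff.mp hf.2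
  obtain ⟨g, hg, hfg, -⟩ := hrep θ hθ hΓ
  refine ⟨⟨fun x => θ * g x, continuousOn_const.mul hg, ?_⟩, le_mul_ANorm hS0 fun θ hθ hΓ => ?_⟩
  · filter_upwards [hfg] with x hx
    rw [← hx, mul_div_cancel₀ _ hθ.ne']
  · obtain ⟨g, -, hfg, hgS⟩ := hrep θ hθ hΓ
    exact eLpNorm_top_restrict_le_of_ae_eq measurableSet_Icc hθ hfg hgS

theorem embedding_into_continuous_general
    (d : ℕ) (hd : 0 < d) (ℓf cf : ℕ → ℕ∞)
    (hcmono : Monotone cf)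
    (hℓ2 : ∀ n, 2 ≤ ℓf n) (hc1 : ∀ n, 1 ≤ cf n)
    (p : ℝ) (hp : 0 < p) (α : ℝ)
    (hγfin : gammaStar ℓf (fun n => (cf n : ℝ≥0∞)) < ⊤)
    (hcond : ENNReal.ofReal ((d : ℝ) / p) * gammaStar ℓf (fun n => (cf n : ℝ≥0∞))
      < ENNReal.ofReal α) :
    ∃ C : ℝ≥0∞, 0 < C ∧ C < ⊤ ∧
      ∀ f : (Fin d → ℝ) → ℝ,
        MemA d ℓf (fun n => (cf n : ℝ≥0∞)) (unitCube d) (ENNReal.ofReal p) α f →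
          (∃ g : (Fin d → ℝ) → ℝ, ContinuousOn g (unitCube d) ∧
            f =ᵐ[volume.restrict (unitCube d)] g) ∧
          eLpNorm f ⊤ (volume.restrict (unitCube d)) ≤
            C * ANorm d ℓf (fun n => (cf n : ℝ≥0∞)) (unitCube d) (ENNReal.ofReal p) α f := by
  have hℓ : 1 ≤ lstar ℓf := le_iSup_of_le 0 (one_le_two.trans (hℓ2 0))
  obtain ⟨γ, hγ0, hγ, hγα⟩ := exists_ofReal_gt_of_ofReal_mul_lt hγfin.ne (by positivity) hcond
  obtain ⟨C, hC1, hC, hgrowth⟩ := exists_growth_bound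
    (fun _ _ h => ENat.toENNReal_le.mpr (hcmono h)) (fun n => by exact_mod_cast hc1 n) hℓ hγ
  obtain ⟨S, hS0, hS⟩ := exists_continuousOn_ae_eq_of_Gamma_le_one hd hp hγ0 hγα hC1 hC
    fun n hn L hL hLℓ => hgrowth n hn L hL (hLℓ.trans (le_iSup ℓf n))
  exact ⟨ENNReal.ofReal S, ENNReal.ofReal_pos.mpr hS0, ENNReal.ofReal_lt_top,
    fun f hf => exists_continuousOn_ae_eq_and_eLpNorm_top_le hS0 hS hf⟩

/-- Theorem 3.1 / `thm:SobolevTypeEmbeddingSufficient`, first part: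
if `γ*(ℓ,c) < ∞` and `α > (d/p)·γ*(ℓ,c)` with `p ∈ (0,∞)`, then
`A^α_{ℓ,c,p}([0,1]^d) ↪ C([0,1]^d)`: every `f` in the space has a continuous representative,
and `‖f‖_{L^∞} ≤ C·‖f‖_{A^α_{ℓ,c,p}}` for a constant `C = C(d,p,α,ℓ,c) > 0`. -/
theorem embedding_into_continuous
    (d : ℕ) (hd : 0 < d) (ℓf cf : ℕ → ℕ∞)
    (hℓmono : Monotone ℓf) (hcmono : Monotone cf)
    (hℓ2 : ∀ n, 2 ≤ ℓf n) (hc1 : ∀ n, 1 ≤ cf n)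
    (p : ℝ) (hp : 0 < p) (α : ℝ) (hα : 0 < α)
    (hγfin : gammaStar ℓf (fun n => (cf n : ℝ≥0∞)) < ⊤)
    (hcond : ENNReal.ofReal ((d : ℝ) / p) * gammaStar ℓf (fun n => (cf n : ℝ≥0∞))
      < ENNReal.ofReal α) :
    ∃ C : ℝ≥0∞, 0 < C ∧ C < ⊤ ∧
      ∀ f : (Fin d → ℝ) → ℝ,
        MemA d ℓf (fun n => (cf n : ℝ≥0∞)) (unitCube d) (ENNReal.ofReal p) α f →
          (∃ g : (Fin d → ℝ) → ℝ, ContinuousOn g (unitCube d) ∧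
            f =ᵐ[volume.restrict (unitCube d)] g) ∧
          eLpNorm f ⊤ (volume.restrict (unitCube d)) ≤
            C * ANorm d ℓf (fun n => (cf n : ℝ≥0∞)) (unitCube d) (ENNReal.ofReal p) α f :=
  embedding_into_continuous_general d hd ℓf cf hcmono hℓ2 hc1 p hp α hγfin hcond
end

section
/- Let d ∈ ℕ, p ∈ (0,∞), and α > 0. If γ*(ℓ,c) > α/(d/p) = αp/d, then the embedding A^α_{ℓ,c,p}([0,1]^d) ↪ C([0,1]^d) does not hold; more precisely, there exists a sequence of continuous functions f_k : [0,1]^d → ℝ with ‖f_k‖_{A^α_{ℓ,c,p}([0,1]^d)} ≤ 1 for all k while ‖f_k‖_{L^∞([0,1]^d)} → ∞ as k → ∞. -/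
open MeasureTheory Filter
open scoped ENNReal NNReal Classical

/-!
For a height `h ≥ 1` and `n ∈ ℕ`, the spike `h • ζ_s` with `s = (h n^α)^{p/d}` vanishes on the
cube outside `[0, 1/s]^d`, so its `L^p` norm is at most `h s^{-d/p} = n^{-α}`. If it lies in
every `Σ_j` with `j ≥ n`, then `n'^α d_p(h • ζ_s, Σ_{n'}) ≤ 1` for all `n'` (compare with `0` for
`n' < n`), so its approximation-space norm is at most `1`, while its sup norm is `h`.

A depth-`L` network whose hidden layers alternate between width `m` and width `1` computes
`w^{L-1} m^{⌊L/2⌋} relu (t - a ∑ᵢ xᵢ)` with only `O(L d m)` weights, all bounded by `c`, and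
realizes `h • ζ_s` as soon as `h s ≤ c^L m^{⌊L/2⌋}`. Since `γ*(ℓ,c) > αp/d`, along a
subsequence `c(n)^L n^{⌊L/2⌋} ≥ δ n^γ` for some `γ > αp/d`, and this eventually beats
`h s = h^{1+p/d} n^{αp/d}` with `m ≈ n / (L (d + 2))`. Letting `h = k → ∞` gives the sequence.
-/

section ApproximationSpace

variable {d : ℕ} {ℓf : ℕ → ℕ∞} {cf : ℕ → ℝ≥0∞} {Ω : Set (Fin d → ℝ)} {p : ℝ≥0∞} {α : ℝ}

lemma dLp_le_eLpNorm_sub {f g : (Fin d → ℝ) → ℝ} {S : Set ((Fin d → ℝ) → ℝ)} (hg : g ∈ S) :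
    dLp d Ω p f S ≤ eLpNorm (f - g) p (volume.restrict Ω) :=
  iInf₂_le g hg

lemma Gamma_le_one_of_eventually_mem_NNSet {F : (Fin d → ℝ) → ℝ} {n : ℕ} (hα : 0 ≤ α)
    (hn : 1 ≤ n) (hzero : ∀ j, 0 ∈ NNSet d ℓf cf j) (hF : ∀ j ≥ n, F ∈ NNSet d ℓf cf j)
    (hnorm : (n : ℝ≥0∞) ^ α * eLpNorm F p (volume.restrict Ω) ≤ 1) :
    Gamma d ℓf cf Ω p α F ≤ 1 := by
  have hnα : 1 ≤ (n : ℝ≥0∞) ^ α := by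
    simpa using ENNReal.rpow_le_rpow (by exact_mod_cast hn : (1 : ℝ≥0∞) ≤ n) hα
  refine max_le (le_trans (le_mul_of_one_le_left' hnα) hnorm) (iSup_le fun j => ?_)
  rcases le_or_gt n (j + 1) with hj | hj
  · have : dLp d Ω p F (NNSet d ℓf cf (j + 1)) = 0 :=
      nonpos_iff_eq_zero.mp <| (dLp_le_eLpNorm_sub (hF _ hj)).trans_eq (by simp)
    simp [this]
  · calc ((j + 1 : ℕ) : ℝ≥0∞) ^ α * dLp d Ω p F (NNSet d ℓf cf (j + 1))
        ≤ (n : ℝ≥0∞) ^ α * eLpNorm F p (volume.restrict Ω) := by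
          gcongr
          simpa using dLp_le_eLpNorm_sub (Ω := Ω) (p := p) (f := F) (hzero (j + 1))
      _ ≤ 1 := hnorm

lemma ANorm_le_one_of_Gamma_le_one {f : (Fin d → ℝ) → ℝ} (h : Gamma d ℓf cf Ω p α f ≤ 1) :
    ANorm d ℓf cf Ω p α f ≤ 1 :=
  sInf_le ⟨1, one_pos, ENNReal.ofReal_one.symm, by simpa using h⟩

end ApproximationSpace

lemma ite_odd_mul_pow_div_two {M : Type*} [Monoid M] (x : M) (k : ℕ) :
    (if Odd k then x else 1) * x ^ (k / 2) = x ^ ((k + 1) / 2) := by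
  rcases Nat.even_or_odd' k with ⟨j, rfl | rfl⟩
  · have h1 : (2 * j + 1) / 2 = j := by omega
    simp [h1]
  · have h1 : (2 * j + 1) / 2 = j := by omega
    have h2 : (2 * j + 1 + 1) / 2 = j + 1 := by omega
    simp [h1, h2, pow_succ']

lemma relu_nonneg (x : ℝ) : 0 ≤ relu x := le_max_left _ _

lemma relu_of_nonneg {x : ℝ} (h : 0 ≤ x) : relu x = x := max_eq_right h

namespace NeuralNet

variable {d : ℕ}

lemma weightCount_le (Φ : NeuralNet d) :
    Φ.weightCount ≤ ∑ ℓ ∈ Finset.range Φ.L, (Φ.N (ℓ + 1) * Φ.N ℓ + Φ.N (ℓ + 1)) := by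
  refine Finset.sum_le_sum fun ℓ _ => add_le_add ?_ ?_ <;>
    exact (Finset.card_filter_le _ _).trans (by simp)

lemma hidden_succ_apply (Φ : NeuralNet d) (k : ℕ) (x : Fin d → ℝ) (i : Fin (Φ.N (k + 1))) :
    Φ.hidden (k + 1) x i = relu (∑ j, Φ.A k i j * Φ.hidden k x j + Φ.b k i) :=
  rfl

lemma sum_hidden_zero (Φ : NeuralNet d) (x : Fin d → ℝ) :
    ∑ j, Φ.hidden 0 x j = ∑ j, x j :=
  Equiv.sum_comp (finCongr Φ.hN0) x

def zero (d : ℕ) : NeuralNet d where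
  L := 1
  hL := one_pos
  N ℓ := if ℓ = 0 then d else 1
  hN0 := by simp
  hNL := by simp
  A _ _ _ := 0
  b _ _ := 0

lemma realization_zero : (zero d).realization = 0 := by
  funext x
  simp only [realization, Pi.add_apply, Matrix.mulVec, dotProduct]
  simp [zero]

lemma weightCount_zero : (zero d).weightCount = 0 := by
  simp [weightCount, zero]

lemma weightsBoundedBy_zero (C : ℝ≥0∞) : (zero d).weightsBoundedBy C := by
  intro ℓ _
  simp [zero]

/-- Widths `d, m, 1, m, 1, …`: every wide layer feeds a narrow one, which multiplies the signal
by `m` at the cost of only `m` weights. -/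
def spikeWidth (d L m ℓ : ℕ) : ℕ := if ℓ = 0 then d else if Odd ℓ ∧ ℓ < L then m else 1

def spike (d L m : ℕ) (hL : 0 < L) (a t w : ℝ) : NeuralNet d where
  L := L
  hL := hL
  N := spikeWidth d L m
  hN0 := by simp [spikeWidth]
  hNL := by simp [spikeWidth, hL.ne']
  A ℓ _ _ := if ℓ = 0 then -a else w
  b ℓ _ := if ℓ = 0 then t else 0

variable {L m : ℕ} {a t w : ℝ}

@[simp]
lemma spike_A {hL : 0 < L} (ℓ : ℕ) (i j) :
    (spike d L m hL a t w).A ℓ i j = if ℓ = 0 then -a else w :=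
  rfl

@[simp]
lemma spike_b {hL : 0 < L} (ℓ : ℕ) (i) :
    (spike d L m hL a t w).b ℓ i = if ℓ = 0 then t else 0 :=
  rfl

lemma hidden_spike {hL : 0 < L} (hw : 0 ≤ w) (x : Fin d → ℝ) :
    ∀ ℓ, ℓ + 1 < L → ∀ i, (spike d L m hL a t w).hidden (ℓ + 1) x i =
      w ^ ℓ * (m : ℝ) ^ ((ℓ + 1) / 2) * relu (t - a * ∑ j, x j) := by
  intro ℓ
  induction ℓ with
  | zero =>
    intro _ i
    simp only [hidden_succ_apply, spike_A, spike_b, if_true, ← Finset.mul_sum, sum_hidden_zero]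
    simp [sub_eq_neg_add]
  | succ ℓ ih =>
    intro hℓ i
    have hprev := ih (by omega)
    have hN : ((spike d L m hL a t w).N (ℓ + 1) : ℝ) = if Odd (ℓ + 1) then (m : ℝ) else 1 := by
      simp [spike, spikeWidth, show ℓ + 1 < L by omega, apply_ite (Nat.cast : ℕ → ℝ)]
    rw [hidden_succ_apply]
    simp only [spike_A, spike_b, Nat.succ_ne_zero, if_false, add_zero, hprev,
      Finset.sum_const, Finset.card_univ, Fintype.card_fin, nsmul_eq_mul]
    rw [hN, ← ite_odd_mul_pow_div_two (m : ℝ) (ℓ + 1)]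
    have hr := relu_nonneg (t - a * ∑ j, x j)
    rw [relu_of_nonneg (by split_ifs <;> positivity)]
    ring

lemma realization_spike (hL : 2 ≤ L) (hw : 0 ≤ w) (x : Fin d → ℝ) :
    (spike d L m (by omega) a t w).realization x =
      w ^ (L - 1) * (m : ℝ) ^ (L / 2) * relu (t - a * ∑ j, x j) := by
  obtain ⟨k, rfl⟩ : ∃ k, L = k + 2 := ⟨L - 2, by omega⟩
  have hN : ((spike d (k + 2) m (by omega) a t w).N (k + 1) : ℝ) =
      if Odd (k + 1) then (m : ℝ) else 1 := by
    simp [spike, spikeWidth, apply_ite (Nat.cast : ℕ → ℝ)]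
  simp only [realization, Pi.add_apply, Matrix.mulVec, dotProduct, spike_A, spike_b]
  change (∑ i, (if k + 1 = 0 then -a else w) * (spike d (k + 2) m _ a t w).hidden (k + 1) x i +
    if k + 1 = 0 then t else 0) = _
  have hlast := hidden_spike (L := k + 2) (m := m) (hL := by omega) (a := a) (t := t) hw x k
    (by omega)
  simp only [Nat.succ_ne_zero, if_false, add_zero, hlast,
    Finset.sum_const, Finset.card_univ, Fintype.card_fin, nsmul_eq_mul, hN]
  rw [show k + 2 - 1 = k + 1 by omega, ← ite_odd_mul_pow_div_two (m : ℝ) (k + 1)]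
  ring

lemma spikeWidth_layer_le (hm : 1 ≤ m) (ℓ : ℕ) :
    spikeWidth d L m (ℓ + 1) * spikeWidth d L m ℓ + spikeWidth d L m (ℓ + 1) ≤ m * (d + 2) := by
  have hpar : ¬ (Odd (ℓ + 1) ∧ Odd ℓ) := fun h => by
    rw [Nat.odd_add_one] at h
    exact h.1 h.2
  unfold spikeWidth
  split_ifs <;> simp_all <;> nlinarith

lemma weightCount_spike (hL : 0 < L) (hm : 1 ≤ m) :
    (spike d L m hL a t w).weightCount ≤ L * (m * (d + 2)) := by
  refine (weightCount_le _).trans ?_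
  exact (Finset.sum_le_sum fun ℓ _ => spikeWidth_layer_le hm ℓ).trans_eq (by simp [spike])

lemma weightsBoundedBy_spike (hL : 0 < L) {C : ℝ≥0∞} (ht : |t| ≤ a) (hw : |w| ≤ a)
    (haC : ENNReal.ofReal a ≤ C) : (spike d L m hL a t w).weightsBoundedBy C := by
  have ha : 0 ≤ a := (abs_nonneg t).trans ht
  refine fun ℓ _ => ⟨fun _ _ => ?_, fun _ => ?_⟩ <;>
    refine le_trans (ENNReal.ofReal_le_ofReal ?_) haC <;>
    simp only [spike_A, spike_b] <;> split_ifs <;> simp [abs_of_nonneg ha, ht, hw, ha]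

end NeuralNet

lemma zero_mem_NNSet {d : ℕ} {ℓf : ℕ → ℕ∞} {cf : ℕ → ℝ≥0∞} {n : ℕ} (hℓ : 1 ≤ ℓf n) :
    0 ∈ NNSet d ℓf cf n :=
  ⟨NeuralNet.zero d, NeuralNet.realization_zero.symm, by simp [NeuralNet.weightCount_zero],
    by simpa [NeuralNet.zero] using hℓ, NeuralNet.weightsBoundedBy_zero _⟩

lemma smul_zeta_mem_NNSet {d L m n : ℕ} {ℓf : ℕ → ℕ∞} {cf : ℕ → ℝ≥0∞} {c h s : ℝ}
    (hL : 2 ≤ L) (hm : 1 ≤ m) (hc : 0 < c) (hs : 1 ≤ s) (hh : 0 ≤ h)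
    (hbudget : h * s ≤ c ^ L * (m : ℝ) ^ (L / 2)) (hn : L * (m * (d + 2)) ≤ n)
    (hℓ : (L : ℕ∞) ≤ ℓf n) (hcf : ENNReal.ofReal c ≤ cf n) :
    h • zeta d s ∈ NNSet d ℓf cf n := by
  have hM : 0 < (m : ℝ) ^ (L / 2) := by positivity
  have hL1 : L - 1 ≠ 0 := by omega
  -- the inner weight `w` solves `w ^ (L - 1) * m ^ (L / 2) * (c / s) = h`
  set w : ℝ := (h * s / (c * (m : ℝ) ^ (L / 2))) ^ (((L - 1 : ℕ) : ℝ)⁻¹)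
  have hw0 : 0 ≤ w := by positivity
  have hwpow : w ^ (L - 1) = h * s / (c * (m : ℝ) ^ (L / 2)) :=
    Real.rpow_inv_natCast_pow (by positivity) hL1
  have hwc : w ≤ c := by
    refine (pow_le_pow_iff_left₀ hw0 hc.le hL1).mp ?_
    rwa [hwpow, div_le_iff₀ (by positivity), ← mul_assoc, ← pow_succ,
      Nat.sub_add_cancel (by omega)]
  refine ⟨NeuralNet.spike d L m (by omega) c (c / s) w, ?_, ?_, ?_, ?_⟩
  · funext x
    have hscale : c / s - c * ∑ j, x j = c / s * (1 - s * ∑ j, x j) := by field_simp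
    have hmax : max 0 (c / s * (1 - s * ∑ j, x j)) = c / s * max 0 (1 - s * ∑ j, x j) := by
      rw [mul_max_of_nonneg _ _ (by positivity), mul_zero]
    rw [NeuralNet.realization_spike hL hw0, hwpow, relu, hscale, hmax, Pi.smul_apply, smul_eq_mul,
      zeta]
    field_simp
  · exact (NeuralNet.weightCount_spike _ hm).trans hn
  · exact hℓ
  · refine NeuralNet.weightsBoundedBy_spike _ ?_ ?_ hcf
    · rw [abs_of_nonneg (by positivity)]
      exact div_le_self hc.le hs
    · rwa [abs_of_nonneg hw0]

section Zeta

variable {d : ℕ} {s : ℝ}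

lemma zeta_nonneg (x : Fin d → ℝ) : 0 ≤ zeta d s x := le_max_left _ _

lemma zeta_zero : zeta d s 0 = 1 := by simp [zeta]

lemma continuous_zeta : Continuous (zeta d s) := by
  unfold zeta
  fun_prop

lemma zeta_le_indicator (hs : 0 < s) {x : Fin d → ℝ} (hx : 0 ≤ x) :
    zeta d s x ≤ (Set.Icc 0 fun _ => s⁻¹).indicator 1 x := by
  have hsum : ∀ j, x j ≤ ∑ i, x i := fun j =>
    Finset.single_le_sum (fun i _ => hx i) (Finset.mem_univ j)
  by_cases hbox : x ∈ Set.Icc 0 fun _ => s⁻¹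
  · rw [Set.indicator_of_mem hbox, Pi.one_apply, zeta]
    exact max_le zero_le_one
      (by nlinarith [Finset.sum_nonneg fun i (_ : i ∈ Finset.univ) => hx i])
  · obtain ⟨j, hj⟩ : ∃ j, s⁻¹ < x j := by simpa [Set.mem_Icc, hx, Pi.le_def] using hbox
    rw [Set.indicator_of_notMem hbox, zeta, max_eq_left]
    have := (inv_lt_iff_one_lt_mul₀' hs).mp (hj.trans_le (hsum j))
    linarith

lemma eLpNorm_smul_zeta_le {h p : ℝ} (hh : 0 ≤ h) (hs : 0 < s) (hp : 0 < p) :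
    eLpNorm (h • zeta d s) (ENNReal.ofReal p) (volume.restrict (unitCube d)) ≤
      ENNReal.ofReal (h * s⁻¹ ^ ((d : ℝ) / p)) := by
  set box : Set (Fin d → ℝ) := Set.Icc 0 fun _ => s⁻¹
  have hpoint : ∀ᵐ x ∂volume.restrict (unitCube d),
      ‖(h • zeta d s) x‖ ≤ ‖box.indicator (fun _ => h) x‖ := by
    refine (ae_restrict_iff' measurableSet_Icc).mpr (Eventually.of_forall fun x hx => ?_)
    have hle := mul_le_mul_of_nonneg_left (zeta_le_indicator hs hx.1) hh
    rw [← Set.indicator_const_mul] at hle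
    simpa [abs_of_nonneg hh, abs_of_nonneg (zeta_nonneg x),
      abs_of_nonneg (Set.indicator_nonneg (fun _ _ => hh) x)] using hle
  calc eLpNorm (h • zeta d s) (ENNReal.ofReal p) (volume.restrict (unitCube d))
      ≤ eLpNorm (box.indicator fun _ => h) (ENNReal.ofReal p) volume :=
        (eLpNorm_mono_ae hpoint).trans (eLpNorm_mono_measure _ Measure.restrict_le_self)
    _ = ENNReal.ofReal (h * s⁻¹ ^ ((d : ℝ) / p)) := by
        rw [eLpNorm_indicator_const measurableSet_Icc (by simpa using hp) ENNReal.ofReal_ne_top]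
        have hvol : volume box = ENNReal.ofReal s⁻¹ ^ d := by simp [box, Real.volume_Icc_pi]
        rw [hvol, Real.enorm_eq_ofReal hh, ← ENNReal.rpow_natCast, ← ENNReal.rpow_mul,
          ENNReal.toReal_ofReal hp.le, ENNReal.ofReal_rpow_of_pos (inv_pos.mpr hs),
          ← ENNReal.ofReal_mul hh, mul_one_div]

lemma ofReal_le_supNormCube_smul_zeta {h : ℝ} :
    ENNReal.ofReal h ≤ supNormCube d (h • zeta d s) := by
  refine le_trans ?_ (le_iSup₂ (f := fun x (_ : x ∈ unitCube d) =>
    ENNReal.ofReal |(h • zeta d s) x|) 0 ⟨le_rfl, fun _ => zero_le_one⟩)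
  simp [zeta_zero, le_abs_self]

end Zeta

lemma mul_inv_rpow_div_rpow_div {h x p q : ℝ} (hh : 0 < h) (hx : 0 < x) (hp : 0 < p)
    (hq : 0 < q) :
    h * ((h * x) ^ (p / q))⁻¹ ^ (q / p) = x⁻¹ := by
  have hpq : p / q * (q / p) = 1 := by field_simp
  rw [Real.inv_rpow (by positivity), ← Real.rpow_mul (by positivity), hpq, Real.rpow_one, mul_inv,
    ← mul_assoc, mul_inv_cancel₀ hh.ne', one_mul]

lemma ANorm_smul_zeta_le_one {d : ℕ} {ℓf : ℕ → ℕ∞} {cf : ℕ → ℝ≥0∞} {p α h : ℝ} {n : ℕ}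
    (hd : 0 < d) (hp : 0 < p) (hα : 0 ≤ α) (hn : 1 ≤ n) (hh : 0 < h)
    (hzero : ∀ j, 0 ∈ NNSet d ℓf cf j)
    (hmem : ∀ j ≥ n, h • zeta d ((h * (n : ℝ) ^ α) ^ (p / d)) ∈ NNSet d ℓf cf j) :
    ANorm d ℓf cf (unitCube d) (ENNReal.ofReal p) α
      (h • zeta d ((h * (n : ℝ) ^ α) ^ (p / d))) ≤ 1 := by
  have hn0 : (0 : ℝ) < n := by exact_mod_cast hn
  have hnα : 0 < (n : ℝ) ^ α := by positivity
  refine ANorm_le_one_of_Gamma_le_one (Gamma_le_one_of_eventually_mem_NNSet hα hn hzero hmem ?_)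
  calc (n : ℝ≥0∞) ^ α * eLpNorm _ (ENNReal.ofReal p) (volume.restrict (unitCube d))
      ≤ ENNReal.ofReal ((n : ℝ) ^ α) * ENNReal.ofReal ((n : ℝ) ^ α)⁻¹ := by
        rw [← ENNReal.ofReal_natCast, ENNReal.ofReal_rpow_of_nonneg hn0.le hα,
          ← mul_inv_rpow_div_rpow_div hh hnα hp (by exact_mod_cast hd : (0 : ℝ) < d)]
        gcongr
        exact eLpNorm_smul_zeta_le hh.le (by positivity) hp
    _ = 1 := by rw [← ENNReal.ofReal_mul hnα.le, mul_inv_cancel₀ hnα.ne', ENNReal.ofReal_one]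

lemma eventually_mul_rpow_le_mul_rpow {β γ : ℝ} (hβγ : β < γ) (K : ℝ) {δ : ℝ} (hδ : 0 < δ) :
    ∀ᶠ n : ℕ in atTop, K * (n : ℝ) ^ β ≤ δ * (n : ℝ) ^ γ := by
  have hlim := (tendsto_rpow_atTop (sub_pos.mpr hβγ)).comp tendsto_natCast_atTop_atTop
  filter_upwards [hlim.eventually_ge_atTop (K / δ), eventually_gt_atTop 0] with n hn hn0
  have hn0' : (0 : ℝ) < n := by exact_mod_cast hn0
  calc K * (n : ℝ) ^ β ≤ δ * (n : ℝ) ^ (γ - β) * (n : ℝ) ^ β := by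
        gcongr
        rwa [div_le_iff₀' hδ] at hn
    _ = δ * (n : ℝ) ^ γ := by rw [mul_assoc, ← Real.rpow_add hn0', sub_add_cancel]

lemma le_two_mul_mul_div {n q : ℕ} (hq : 0 < q) (hqn : q ≤ n) : n ≤ 2 * q * (n / q) := by
  have h1 := Nat.lt_mul_div_succ n hq
  have h2 : 1 ≤ n / q := (Nat.one_le_div_iff hq).mpr hqn
  nlinarith

lemma eventually_mul_rpow_le_pow_mul_div_pow {β γ δ K : ℝ} (hβγ : β < γ) (hδ : 0 < δ) (L : ℕ)
    {q : ℕ} (hq : 0 < q) :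
    ∀ᶠ n : ℕ in atTop, ∀ c : ℝ, 0 ≤ c → δ * (n : ℝ) ^ γ ≤ c ^ L * (n : ℝ) ^ (L / 2) →
      K * (n : ℝ) ^ β ≤ c ^ L * ((n / q : ℕ) : ℝ) ^ (L / 2) := by
  set Q : ℝ := ((2 * q : ℕ) : ℝ) ^ (L / 2)
  have hQ : 0 < Q := by positivity
  filter_upwards [eventually_mul_rpow_le_mul_rpow hβγ (K * Q) hδ, eventually_ge_atTop q]
    with n hKn hqn c hc hcn
  have hsplit : (n : ℝ) ^ (L / 2) ≤ Q * ((n / q : ℕ) : ℝ) ^ (L / 2) := by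
    rw [← mul_pow]
    gcongr
    exact_mod_cast le_two_mul_mul_div hq hqn
  refine le_of_mul_le_mul_left ?_ hQ
  calc Q * (K * (n : ℝ) ^ β) ≤ δ * (n : ℝ) ^ γ := by linarith
    _ ≤ c ^ L * (n : ℝ) ^ (L / 2) := hcn
    _ ≤ Q * (c ^ L * ((n / q : ℕ) : ℝ) ^ (L / 2)) := by
        nlinarith [pow_nonneg hc L]

lemma exists_le_of_le_lstar {ℓf : ℕ → ℕ∞} {L : ℕ} (hL : 1 ≤ L) (h : (L : ℕ∞) ≤ lstar ℓf) :
    ∃ n, (L : ℕ∞) ≤ ℓf n := by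
  obtain ⟨k, rfl⟩ : ∃ k, L = k + 1 := ⟨L - 1, by omega⟩
  have hlt : (k : ℕ∞) < ⨆ n, ℓf n := lt_of_lt_of_le (by exact_mod_cast k.lt_succ_self) h
  obtain ⟨n, hn⟩ := lt_iSup_iff.mp hlt
  exact ⟨n, by exact_mod_cast ENat.natCast_add_one_le_iff.mpr hn⟩

lemma exists_real_le_of_ofReal_le_pow_mul {y : ℝ≥0∞} (hy : 1 ≤ y) {L : ℕ} (hL : 1 ≤ L)
    {a b : ℝ} (hb : 0 < b) (h : ENNReal.ofReal a ≤ y ^ L * ENNReal.ofReal b) :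
    ∃ c : ℝ, 1 ≤ c ∧ ENNReal.ofReal c ≤ y ∧ a ≤ c ^ L * b := by
  rcases eq_or_ne y ⊤ with rfl | hy'
  · refine ⟨max 1 (a / b), le_max_left _ _, le_top, ?_⟩
    calc a ≤ max 1 (a / b) * b := (div_le_iff₀ hb).mp (le_max_right _ _)
      _ ≤ max 1 (a / b) ^ L * b := by
          gcongr
          exact le_self_pow₀ (le_max_left _ _) (by omega)
  · refine ⟨y.toReal, by simpa using ENNReal.toReal_mono hy' hy,
      by rw [ENNReal.ofReal_toReal hy'], ?_⟩
    rwa [← ENNReal.ofReal_toReal hy', ← ENNReal.ofReal_pow ENNReal.toReal_nonneg,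
      ← ENNReal.ofReal_mul (by positivity), ENNReal.ofReal_le_ofReal_iff (by positivity)] at h

lemma frequently_le_of_lt_gammaStar {ℓf : ℕ → ℕ∞} {cf : ℕ → ℝ≥0∞} {β : ℝ}
    (h : ENNReal.ofReal β < gammaStar ℓf cf) :
    ∃ γ > β, ∃ L : ℕ, 1 ≤ L ∧ (L : ℕ∞) ≤ lstar ℓf ∧ ∃ δ > (0 : ℝ), ∃ᶠ n : ℕ in atTop,
      ENNReal.ofReal δ * (n : ℝ≥0∞) ^ γ ≤ cf n ^ L * (n : ℝ≥0∞) ^ (L / 2) := by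
  rw [gammaStar, lt_sSup_iff] at h
  obtain ⟨_, ⟨γ, -, rfl, L, hL1, hL, hpos⟩, hβγ⟩ := h
  obtain ⟨δ, -, hδpos, hδ⟩ := ENNReal.lt_iff_exists_real_btwn.mp hpos
  refine ⟨γ, (ENNReal.ofReal_lt_ofReal_iff'.mp hβγ).1, L, hL1, hL, δ,
    ENNReal.ofReal_pos.mp hδpos, ?_⟩
  exact (frequently_lt_of_lt_limsup (by isBoundedDefault) hδ).mono fun n hn =>
    ENNReal.mul_le_of_le_div hn.le

lemma frequently_le_of_lt_gammaStar_of_two_le {ℓf : ℕ → ℕ∞} {cf : ℕ → ℝ≥0∞} {β : ℝ}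
    (h : ENNReal.ofReal β < gammaStar ℓf cf) (hcf : ∀ n, 1 ≤ cf n) (hℓ : 2 ≤ lstar ℓf) :
    ∃ γ > β, ∃ L : ℕ, 2 ≤ L ∧ (L : ℕ∞) ≤ lstar ℓf ∧ ∃ δ > (0 : ℝ), ∃ᶠ n : ℕ in atTop,
      ∃ c : ℝ, 1 ≤ c ∧ ENNReal.ofReal c ≤ cf n ∧ δ * (n : ℝ) ^ γ ≤ c ^ L * (n : ℝ) ^ (L / 2) := by
  obtain ⟨γ, hβγ, L₀, -, hL₀, δ, hδ, hfreq⟩ := frequently_le_of_lt_gammaStar h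
  refine ⟨γ, hβγ, max 2 L₀, le_max_left _ _, by exact_mod_cast max_le hℓ hL₀, δ, hδ, ?_⟩
  refine (hfreq.and_eventually (eventually_ge_atTop 1)).mono fun n ⟨hn, hn1⟩ => ?_
  have hn0 : (0 : ℝ) < n := by exact_mod_cast hn1
  have hn1' : (1 : ℝ≥0∞) ≤ n := by exact_mod_cast hn1
  refine exists_real_le_of_ofReal_le_pow_mul (hcf n) (by omega) (by positivity) ?_
  calc ENNReal.ofReal (δ * (n : ℝ) ^ γ) = ENNReal.ofReal δ * (n : ℝ≥0∞) ^ γ := by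
        rw [ENNReal.ofReal_mul hδ.le, ← ENNReal.ofReal_rpow_of_pos hn0, ENNReal.ofReal_natCast]
    _ ≤ cf n ^ L₀ * (n : ℝ≥0∞) ^ (L₀ / 2) := hn
    _ ≤ cf n ^ max 2 L₀ * (n : ℝ≥0∞) ^ (max 2 L₀ / 2) := by
        gcongr
        exacts [hcf n, le_max_right _ _, le_max_right _ _]
    _ = cf n ^ max 2 L₀ * ENNReal.ofReal ((n : ℝ) ^ (max 2 L₀ / 2)) := by
        rw [ENNReal.ofReal_pow hn0.le, ENNReal.ofReal_natCast]

lemma exists_ANorm_smul_zeta_le_one {d L : ℕ} {ℓf : ℕ → ℕ∞} {cf : ℕ → ℝ≥0∞} {p α γ δ h : ℝ}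
    (hd : 0 < d) (hp : 0 < p) (hα : 0 ≤ α) (hℓmono : Monotone ℓf) (hcmono : Monotone cf)
    (hℓ : ∀ n, 1 ≤ ℓf n) (hL : 2 ≤ L) (hLℓ : (L : ℕ∞) ≤ lstar ℓf) (hγ : α * p / d < γ)
    (hδ : 0 < δ) (hfreq : ∃ᶠ n : ℕ in atTop, ∃ c : ℝ, 1 ≤ c ∧ ENNReal.ofReal c ≤ cf n ∧
      δ * (n : ℝ) ^ γ ≤ c ^ L * (n : ℝ) ^ (L / 2))
    (hh : 1 ≤ h) :
    ∃ s, ANorm d ℓf cf (unitCube d) (ENNReal.ofReal p) α (h • zeta d s) ≤ 1 := by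
  obtain ⟨n₀, hn₀⟩ := exists_le_of_le_lstar (by omega) hLℓ
  set q := L * (d + 2)
  have hq : 0 < q := by positivity
  obtain ⟨n, ⟨c, hc, hcn, hgrowth⟩, hbudget, hn⟩ := (hfreq.and_eventually
    ((eventually_mul_rpow_le_pow_mul_div_pow (K := h * h ^ (p / d)) hγ hδ L hq).and
      (eventually_ge_atTop (max n₀ q)))).exists
  have hn1 : 1 ≤ n := by omega
  have hn1' : (1 : ℝ) ≤ n := by exact_mod_cast hn1
  have hs : 1 ≤ (h * (n : ℝ) ^ α) ^ (p / d) :=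
    Real.one_le_rpow (one_le_mul_of_one_le_of_one_le hh (Real.one_le_rpow hn1' hα)) (by positivity)
  refine ⟨_, ANorm_smul_zeta_le_one hd hp hα hn1 (by linarith)
    (fun j => zero_mem_NNSet (hℓ j)) fun j hj => ?_⟩
  refine smul_zeta_mem_NNSet (m := n / q) hL ((Nat.one_le_div_iff hq).mpr (by omega))
    (by linarith) hs (by linarith) ?_ ?_ (hn₀.trans (hℓmono (show n₀ ≤ j by omega)))
    (hcn.trans (hcmono hj))
  · calc h * (h * (n : ℝ) ^ α) ^ (p / d) = h * h ^ (p / d) * (n : ℝ) ^ (α * p / d) := by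
          rw [Real.mul_rpow (by linarith) (by positivity), ← Real.rpow_mul (by positivity),
            mul_div_assoc, mul_assoc]
      _ ≤ c ^ L * ((n / q : ℕ) : ℝ) ^ (L / 2) := hbudget c (by linarith) hgrowth
  · calc L * (n / q * (d + 2)) = n / q * q := by ring
      _ ≤ j := (Nat.div_mul_le_self n q).trans hj

/-- Theorem 3.6 / `thm:SobolevTypeEmbeddingNecessary`, first part:
if `p ∈ (0,∞)` and `γ*(ℓ,c) > α·p/d`, then `A^α_{ℓ,c,p}([0,1]^d) ↪ C([0,1]^d)` fails:
there is a sequence of continuous functions with approximation-space norm at most `1`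
whose sup norms on `[0,1]^d` tend to `∞`. -/
theorem no_embedding_into_continuous
    (d : ℕ) (hd : 0 < d) (ℓf cf : ℕ → ℕ∞)
    (hℓmono : Monotone ℓf) (hcmono : Monotone cf)
    (hℓ2 : ∀ n, 2 ≤ ℓf n) (hc1 : ∀ n, 1 ≤ cf n)
    (p : ℝ) (hp : 0 < p) (α : ℝ) (hα : 0 < α)
    (hcond : ENNReal.ofReal (α * p / (d : ℝ)) < gammaStar ℓf (fun n => (cf n : ℝ≥0∞))) :
    ∃ f : ℕ → (Fin d → ℝ) → ℝ,
      (∀ k, ContinuousOn (f k) (unitCube d)) ∧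
      (∀ k, ANorm d ℓf (fun n => (cf n : ℝ≥0∞)) (unitCube d) (ENNReal.ofReal p) α (f k) ≤ 1) ∧
      Filter.Tendsto (fun k => supNormCube d (f k)) Filter.atTop (nhds ⊤) := by
  obtain ⟨γ, hγ, L, hL, hLℓ, δ, hδ, hfreq⟩ := frequently_le_of_lt_gammaStar_of_two_le hcond
    (fun n => by exact_mod_cast hc1 n) ((hℓ2 0).trans (le_iSup ℓf 0))
  have hbump : ∀ k : ℕ, ∃ s, ANorm d ℓf (fun n => (cf n : ℝ≥0∞)) (unitCube d)
      (ENNReal.ofReal p) α ((max 1 k : ℝ) • zeta d s) ≤ 1 := fun k =>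
    exists_ANorm_smul_zeta_le_one hd hp hα.le hℓmono (ENat.toENNReal_mono.comp hcmono)
      (fun n => one_le_two.trans (hℓ2 n)) hL hLℓ hγ hδ hfreq (le_max_left _ _)
  choose s hs using hbump
  refine ⟨fun k => (max 1 k : ℝ) • zeta d (s k),
    fun k => (continuous_zeta.const_smul _).continuousOn, hs, ENNReal.tendsto_nhds_top fun M => ?_⟩
  filter_upwards [eventually_gt_atTop M] with k hk
  calc (M : ℝ≥0∞) < k := by exact_mod_cast hk
    _ ≤ ENNReal.ofReal (max 1 k) := by simp
    _ ≤ _ := ofReal_le_supNormCube_smul_zeta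
end

section
/- Let p ∈ (0,∞) and d ∈ ℕ. There exists a constant C = C(d,p) > 0 such that for every T ∈ (0,1] and every Lipschitz continuous function f : [0,1]^d → ℝ, one has ‖f‖_{L^∞([0,1]^d)} ≤ C·(T^{−d/p}·‖f‖_{L^p([0,1]^d)} + T·Lip(f)). -/
open MeasureTheory Filter
open scoped ENNReal NNReal Classical

/-!
Every point `x` of the cube lies in a subcube of side `T` contained in the cube. On that subcube
`|f| ≥ |f x| - T·Lip(f)`, so the `L^p` norm of `f` is at least `(|f x| - T·Lip(f))·T^{d/p}`,
which rearranges to the claimed bound with `C = 1`.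
-/

lemma abs_sub_le_eLip_toReal_mul_dist {d : ℕ} {f : (Fin d → ℝ) → ℝ}
    (hf : eLip d 1 f ≠ ⊤)
    {x y : Fin d → ℝ} (hx : x ∈ unitCube d) (hy : y ∈ unitCube d) :
    |f x - f y| ≤ (eLip d 1 f).toReal * dist x y := by
  rcases eq_or_ne x y with rfl | hxy
  · simp
  have hquot : ENNReal.ofReal (|f x - f y| / dist x y ^ (1 : ℝ)) ≤ eLip d 1 f :=
    le_iSup₂_of_le x hx <| le_iSup₂_of_le y hy <| le_iSup_of_le hxy le_rfl
  rw [Real.rpow_one, ENNReal.ofReal_le_iff_le_toReal hf,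
    div_le_iff₀ (dist_pos.mpr hxy)] at hquot
  exact hquot

lemma exists_Icc_add_const_subset_unitCube {d : ℕ} {x : Fin d → ℝ} (hx : x ∈ unitCube d)
    {T : ℝ} (hT : 0 ≤ T) (hT1 : T ≤ 1) :
    ∃ a : Fin d → ℝ,
      x ∈ Set.Icc a (a + fun _ => T) ∧ Set.Icc a (a + fun _ => T) ⊆ unitCube d := by
  refine ⟨fun j => min (x j) (1 - T), ⟨fun j => min_le_left _ _, fun j => ?_⟩,
    fun y hy => ⟨fun j => (le_min (hx.1 j) (sub_nonneg.2 hT1)).trans (hy.1 j), fun j => ?_⟩⟩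
  · have hxj : x j ≤ 1 := hx.2 j
    simp only [Pi.add_apply]
    grind
  · have hyj : y j ≤ min (x j) (1 - T) + T := hy.2 j
    simp only [Pi.one_apply]
    linarith [min_le_right (x j) (1 - T)]

lemma dist_le_of_mem_Icc_add_const {ι : Type*} [Fintype ι] {a x y : ι → ℝ} {T : ℝ}
    (hT : 0 ≤ T)
    (hx : x ∈ Set.Icc a (a + fun _ => T)) (hy : y ∈ Set.Icc a (a + fun _ => T)) :
    dist x y ≤ T :=
  calc dist x y ≤ dist a (a + fun _ => T) := Real.dist_le_of_mem_pi_Icc hx hy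
    _ = ‖fun _ : ι => T‖ := dist_self_add_right _ _
    _ ≤ T := (pi_norm_const_le T).trans (abs_of_nonneg hT).le

lemma volume_Icc_add_const {ι : Type*} [Fintype ι] (a : ι → ℝ) (T : ℝ) :
    volume (Set.Icc a (a + fun _ => T)) = ENNReal.ofReal T ^ Fintype.card ι := by
  simp [Real.volume_Icc_pi]

lemma ofReal_mul_measure_rpow_le_eLpNorm {α : Type*} [MeasurableSpace α] {μ : Measure α}
    {p : ℝ≥0∞} (hp0 : p ≠ 0) (hp : p ≠ ⊤) {s : Set α} (hs : MeasurableSet s)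
    {f : α → ℝ} {M : ℝ} (hM : ∀ y ∈ s, M ≤ |f y|) :
    ENNReal.ofReal M * μ s ^ (1 / p.toReal) ≤ eLpNorm f p (μ.restrict s) := by
  have hconst : eLpNorm (fun _ => max M 0) p (μ.restrict s) ≤ eLpNorm f p (μ.restrict s) := by
    refine eLpNorm_mono_ae ((ae_restrict_iff' hs).2 (ae_of_all _ fun y hy => ?_))
    simpa [abs_of_nonneg (le_max_right M 0)] using hM y hy
  rwa [eLpNorm_const' _ hp0 hp, Measure.restrict_apply_univ, Real.enorm_eq_ofReal_abs,
    abs_of_nonneg (le_max_right M 0), ENNReal.ofReal_max, ENNReal.ofReal_zero,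
    max_eq_left zero_le] at hconst

lemma ofReal_le_rpow_mul_eLpNorm_unitCube_of_le_on_subcube {d : ℕ} {p T : ℝ} (hp : 0 < p)
    (hT : 0 < T) {a : Fin d → ℝ} (hQ : Set.Icc a (a + fun _ => T) ⊆ unitCube d)
    {f : (Fin d → ℝ) → ℝ} {M : ℝ}
    (hM : ∀ y ∈ Set.Icc a (a + fun _ => T), M ≤ |f y|) :
    ENNReal.ofReal M ≤ ENNReal.ofReal (T ^ (-(d : ℝ) / p))
      * eLpNorm f (ENNReal.ofReal p) (volume.restrict (unitCube d)) := by
  have hLp : ENNReal.ofReal M * ENNReal.ofReal (T ^ ((d : ℝ) / p))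
      ≤ eLpNorm f (ENNReal.ofReal p) (volume.restrict (unitCube d)) :=
    calc _ = ENNReal.ofReal M
          * volume (Set.Icc a (a + fun _ => T)) ^ (1 / (ENNReal.ofReal p).toReal) := by
          rw [volume_Icc_add_const, Fintype.card_fin, ENNReal.toReal_ofReal hp.le,
            ← ENNReal.rpow_natCast, ← ENNReal.rpow_mul, ENNReal.ofReal_rpow_of_pos hT,
            mul_one_div]
      _ ≤ eLpNorm f (ENNReal.ofReal p) (volume.restrict (Set.Icc a (a + fun _ => T))) :=
          ofReal_mul_measure_rpow_le_eLpNorm (by simpa using hp) ENNReal.ofReal_ne_top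
            measurableSet_Icc hM
      _ ≤ _ := eLpNorm_mono_measure _ (Measure.restrict_mono hQ le_rfl)
  rwa [neg_div, Real.rpow_neg hT.le, ENNReal.ofReal_inv_of_pos (by positivity), mul_comm,
    ← div_eq_mul_inv, ENNReal.le_div_iff_mul_le
      (Or.inl (ENNReal.ofReal_pos.2 (by positivity)).ne') (Or.inl ENNReal.ofReal_ne_top)]

lemma ofReal_abs_le_rpow_mul_eLpNorm_add_mul_eLip {d : ℕ} {p T : ℝ} (hp : 0 < p) (hT : 0 < T)
    (hT1 : T ≤ 1) {f : (Fin d → ℝ) → ℝ} (hf : eLip d 1 f ≠ ⊤) {x : Fin d → ℝ}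
    (hx : x ∈ unitCube d) :
    ENNReal.ofReal |f x| ≤ ENNReal.ofReal (T ^ (-(d : ℝ) / p))
        * eLpNorm f (ENNReal.ofReal p) (volume.restrict (unitCube d))
      + ENNReal.ofReal T * eLip d 1 f := by
  set L := (eLip d 1 f).toReal
  obtain ⟨a, hxQ, hQ⟩ := exists_Icc_add_const_subset_unitCube hx hT.le hT1
  have hlower : ∀ y ∈ Set.Icc a (a + fun _ => T), |f x| - T * L ≤ |f y| := by
    intro y hy
    have hfxy := abs_sub_le_eLip_toReal_mul_dist hf hx (hQ hy)
    have hxy := dist_le_of_mem_Icc_add_const hT.le hxQ hy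
    nlinarith [abs_sub_abs_le_abs_sub (f x) (f y), ENNReal.toReal_nonneg (a := eLip d 1 f)]
  calc ENNReal.ofReal |f x| = ENNReal.ofReal ((|f x| - T * L) + T * L) := by rw [sub_add_cancel]
    _ ≤ ENNReal.ofReal (|f x| - T * L) + ENNReal.ofReal (T * L) := ENNReal.ofReal_add_le
    _ ≤ _ := by
      rw [ENNReal.ofReal_mul hT.le, ENNReal.ofReal_toReal hf]
      gcongr
      exact ofReal_le_rpow_mul_eLpNorm_unitCube_of_le_on_subcube hp hT hQ hlower

theorem sup_le_Lp_add_lipschitz_general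
    (d : ℕ) (p : ℝ) (hp : 0 < p) :
    ∃ C : ℝ, 0 < C ∧
      ∀ T : ℝ, 0 < T → T ≤ 1 →
        ∀ f : (Fin d → ℝ) → ℝ, eLip d 1 f < ⊤ →
          supNormCube d f ≤ ENNReal.ofReal C *
            (ENNReal.ofReal (T ^ (-(d : ℝ) / p))
                * eLpNorm f (ENNReal.ofReal p) (volume.restrict (unitCube d))
              + ENNReal.ofReal T * eLip d 1 f) := by
  refine ⟨1, one_pos, fun T hT hT1 f hf => ?_⟩
  rw [ENNReal.ofReal_one, one_mul]
  exact iSup₂_le fun x hx =>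
    ofReal_abs_le_rpow_mul_eLpNorm_add_mul_eLip hp hT hT1 hf.ne hx

/-- Lemma 3.2 / `lem:LipschitzLpVersusLInfty`: there is `C = C(d,p) > 0`
such that for all `T ∈ (0,1]` and all Lipschitz `f : [0,1]^d → ℝ`,
`‖f‖_{L^∞} ≤ C·(T^{−d/p}·‖f‖_{L^p} + T·Lip(f))`. -/
theorem sup_le_Lp_add_lipschitz
    (d : ℕ) (hd : 0 < d) (p : ℝ) (hp : 0 < p) :
    ∃ C : ℝ, 0 < C ∧
      ∀ T : ℝ, 0 < T → T ≤ 1 →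
        ∀ f : (Fin d → ℝ) → ℝ, eLip d 1 f < ⊤ →
          supNormCube d f ≤ ENNReal.ofReal C *
            (ENNReal.ofReal (T ^ (-(d : ℝ) / p))
                * eLpNorm f (ENNReal.ofReal p) (volume.restrict (unitCube d))
              + ENNReal.ofReal T * eLip d 1 f) :=
  sup_le_Lp_add_lipschitz_general d p hp
end
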